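/- arXiv:2502.21204 — 2 statements merged into one kernel-verified Lean document; each statement's English description precedes it below -/
import Mathlib

section
/- Let T = T_1 *_{e1,e2} T_2 be a gluing of trees along leaf edges e1 = {u1,k1}, e2 = {u2,k2}, and let π_i : (P_{T_i} ∨̂ {0}) → Δ_3 be gluing integral projections, i.e., affine maps with π_1(0) = (0,0,1), π_2(0) = (1,0,0), π_1(c^{i↔j}) = (1,0,0) if e1 ∉ i↔j and (0,1,0) if e1 ∈ i↔j, and π_2(c^{i↔j}) = (0,1,0) if e2 ∈ i↔j and (0,0,1) otherwise. Then P_T is affinely isomorphic to the toric fiber product (P_{T_1} ∨̂ {0}) ×_{Δ_3} (P_{T_2} ∨̂ {0}). -/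
open Classical SimpleGraph

noncomputable section

variable {V : Type*}

/-- A leaf: a vertex with exactly one neighbor. -/
def IsLeaf (G : SimpleGraph V) (v : V) : Prop := ∃! w, G.Adj v w

/-- `e` is an edge on the (unique, for trees) path between `i` and `j`. -/
def onPath (G : SimpleGraph V) (i j : V) (e : Sym2 V) : Prop :=
  ∃ p : G.Walk i j, p.IsPath ∧ e ∈ p.edges

/-- The edge indicator vector `c^{i↔j}` of the path between `i` and `j`. -/
def pathVec (G : SimpleGraph V) (i j : V) : Sym2 V → ℝ :=
  fun e => if onPath G i j e then 1 else 0

/-- The path polytope `P_T`: the convex hull of the indicator vectors of the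
paths between pairs of distinct leaves. -/
def pathPolytope (G : SimpleGraph V) : Set (Sym2 V → ℝ) :=
  convexHull ℝ {x | ∃ i j : V, i ≠ j ∧ IsLeaf G i ∧ IsLeaf G j ∧ x = pathVec G i j}

/-- `E_leaf(T)`: edges incident to at least one leaf. -/
def leafEdges (G : SimpleGraph V) : Set (Sym2 V) :=
  {e | e ∈ G.edgeSet ∧ ∃ v ∈ e, IsLeaf G v}

/-- Vertex set of the gluing of two graphs along the leaves `k1`, `k2`. -/
def GlueV (V1 V2 : Type) (k1 : V1) (k2 : V2) : Type :=
  {x : V1 ⊕ V2 // x ≠ Sum.inl k1 ∧ x ≠ Sum.inr k2}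

def glueAdj {V1 V2 : Type} (G1 : SimpleGraph V1) (G2 : SimpleGraph V2) (v1 : V1) (v2 : V2) :
    V1 ⊕ V2 → V1 ⊕ V2 → Prop
  | Sum.inl x, Sum.inl y => G1.Adj x y
  | Sum.inr x, Sum.inr y => G2.Adj x y
  | Sum.inl x, Sum.inr y => x = v1 ∧ y = v2
  | Sum.inr x, Sum.inl y => x = v2 ∧ y = v1

/-- The gluing `T1 *_{e1,e2} T2` along the leaf edges `e1 = {v1,k1}`, `e2 = {v2,k2}`:
delete the leaves `k1`, `k2` and add the edge `{v1,v2}`. -/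
def glueGraph {V1 V2 : Type} (G1 : SimpleGraph V1) (G2 : SimpleGraph V2)
    (v1 k1 : V1) (v2 k2 : V2) : SimpleGraph (GlueV V1 V2 k1 k2) where
  Adj a b := glueAdj G1 G2 v1 v2 a.1 b.1
  symm := by
    constructor
    rintro ⟨(x|x), _⟩ ⟨(y|y), _⟩ h <;> simp only [glueAdj] at * <;>
      first | exact h.symm | tauto
  loopless := by
    constructor
    rintro ⟨(x|x), _⟩ h <;> simp only [glueAdj] at h <;>
      first | exact G1.irrefl h | exact G2.irrefl h

/-- The toric fiber product of `A` and `B` along the affine maps `π1, π2`: the convex hull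
of the pairs of vertices (extreme points) of `A` and `B` with matching images. -/
def tfp {E1 E2 F : Type*} [AddCommGroup E1] [Module ℝ E1] [AddCommGroup E2] [Module ℝ E2]
    [AddCommGroup F] [Module ℝ F]
    (π1 : E1 →ᵃ[ℝ] F) (π2 : E2 →ᵃ[ℝ] F) (A : Set E1) (B : Set E2) : Set (E1 × E2) :=
  convexHull ℝ {p : E1 × E2 |
    p.1 ∈ Set.extremePoints ℝ A ∧ p.2 ∈ Set.extremePoints ℝ B ∧ π1 p.1 = π2 p.2}

/-!
`T1` sits in the glued tree `T` as an induced subtree, with the deleted leaf `k1` played by `v2`;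
likewise `T2`, with `k2` played by `v1`. Both copies contain the new edge `{v1, v2}`, as the image
of `e1` and of `e2`, and `T` is again a tree. So a leaf-to-leaf path of `T` is either a leaf path
of one `Ti` avoiding `ei`, or the union of the paths `i ↔ k1` in `T1` and `l ↔ k2` in `T2`, which
overlap exactly in `{v1, v2}`. The gluing projections pair the vertices of the two polytopes in
exactly these three ways, `(c^{ij}, 0)`, `(0, c^{lm})` and `(c^{i↔k1}, c^{l↔k2})`, so the linear
map that pushes both factors forward and halves the doubly counted edge maps the matched pairs
onto the leaf paths of `T`. It is injective on the fiber product because every matched pair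
`(x, y)` is supported on the edges and satisfies `x_{e1} = y_{e2}`, and such a pair is recovered
from its image.
-/

section Paths

variable {G : SimpleGraph V}

lemma IsLeaf.adj_iff {k v w : V} (hk : IsLeaf G k) (hv : G.Adj v k) : G.Adj k w ↔ w = v :=
  ⟨fun h => hk.unique h hv.symm, fun h => h ▸ hv.symm⟩

lemma IsLeaf.not_mem_support {k i j : V} (hk : IsLeaf G k) {p : G.Walk i j} (hp : p.IsPath)
    (hi : i ≠ k) (hj : j ≠ k) : k ∉ p.support := by
  intro hkp
  obtain ⟨q, r, -, -, rfl⟩ := hp.mem_support_iff_exists_append.1 hkp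
  have hq : ¬ q.Nil := Walk.not_nil_of_ne hi
  have hr : ¬ r.Nil := Walk.not_nil_of_ne hj.symm
  have hw : q.penultimate = r.snd := hk.unique (q.adj_penultimate hq).symm (r.adj_snd hr)
  exact hp.ne_of_mem_support_of_append (r.adj_snd hr).ne.symm (q.getVert_mem_support _)
    (r.getVert_mem_support _) hw

lemma IsLeaf.mem_edges {k v i : V} (hk : IsLeaf G k) (hv : G.Adj v k) (p : G.Walk k i)
    (hi : i ≠ k) : s(v, k) ∈ p.edges := by
  cases p with
  | nil => exact absurd rfl hi
  | cons h q => simp [hk.unique h hv.symm, Sym2.eq_swap]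

lemma IsLeaf.not_onPath {k i j : V} (hk : IsLeaf G k) (hi : i ≠ k) (hj : j ≠ k) (v : V) :
    ¬ onPath G i j s(v, k) :=
  fun ⟨p, hp, he⟩ => hk.not_mem_support hp hi hj (p.snd_mem_support_of_mem_edges he)

lemma onPath_comm {i j : V} {e : Sym2 V} : onPath G i j e ↔ onPath G j i e := by
  constructor <;> rintro ⟨p, hp, he⟩ <;> exact ⟨p.reverse, hp.reverse, by simpa using he⟩

lemma pathVec_comm (i j : V) : pathVec G i j = pathVec G j i := by
  funext e
  simp only [pathVec, onPath_comm]

lemma onPath_leafEdge_iff (hG : G.IsTree) {k v i j : V} (hk : IsLeaf G k) (hv : G.Adj v k)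
    (hij : i ≠ j) : onPath G i j s(v, k) ↔ i = k ∨ j = k := by
  refine ⟨fun h => ?_, ?_⟩
  · by_contra! hne
    exact hk.not_onPath hne.1 hne.2 v h
  · rintro (rfl | rfl)
    · obtain ⟨p, hp, -⟩ := hG.existsUnique_path i j
      exact ⟨p, hp, hk.mem_edges hv p hij.symm⟩
    · obtain ⟨p, hp, -⟩ := hG.existsUnique_path j i
      exact onPath_comm.1 ⟨p, hp, hk.mem_edges hv p hij⟩

lemma onPath_iff_mem_edges (hG : G.IsAcyclic) {i j : V} {p : G.Walk i j} (hp : p.IsPath)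
    {e : Sym2 V} : onPath G i j e ↔ e ∈ p.edges := by
  refine ⟨fun ⟨q, hq, he⟩ => ?_, fun he => ⟨p, hp, he⟩⟩
  have hqp : q = p := congrArg Subtype.val ((hG.subsingleton_path i j).elim ⟨q, hq⟩ ⟨p, hp⟩)
  rwa [← hqp]

lemma pathVec_eq_of_isPath (hG : G.IsAcyclic) {i j : V} {p : G.Walk i j} (hp : p.IsPath) :
    pathVec G i j = fun e => if e ∈ p.edges then 1 else 0 := by
  funext e
  simp only [pathVec, onPath_iff_mem_edges hG hp]

lemma pathVec_apply_eq_zero_or_one (i j : V) (e : Sym2 V) :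
    pathVec G i j e = 0 ∨ pathVec G i j e = 1 := by
  unfold pathVec
  split_ifs <;> simp

lemma pathVec_apply_of_not_mem_edgeSet {e : Sym2 V} (he : e ∉ G.edgeSet) (i j : V) :
    pathVec G i j e = 0 :=
  if_neg fun ⟨p, _, hp⟩ => he (p.edges_subset_edgeSet hp)

lemma pathVec_append (hG : G.IsAcyclic) {u v w : V} {p : G.Walk u v} {q : G.Walk v w}
    (hpq : (p.append q).IsPath) : pathVec G u w = pathVec G u v + pathVec G v w := by
  rw [pathVec_eq_of_isPath hG hpq, pathVec_eq_of_isPath hG hpq.of_append_left,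
    pathVec_eq_of_isPath hG hpq.of_append_right]
  have hdisj := List.disjoint_of_nodup_append (p.edges_append q ▸ hpq.isTrail.edges_nodup)
  funext e
  by_cases hp : e ∈ p.edges <;> by_cases hq : e ∈ q.edges <;> simp [Walk.edges_append, hp, hq]
  exact hdisj hp hq

lemma IsLeaf.pathVec_eq_add_single (hG : G.IsTree) {k v i : V} (hk : IsLeaf G k)
    (hv : G.Adj v k) (hi : i ≠ k) : pathVec G i k = pathVec G i v + Pi.single s(v, k) 1 := by
  obtain ⟨q, hq, -⟩ := hG.existsUnique_path i v
  have hqk : (q.append (.cons hv .nil)).IsPath := by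
    rw [← Walk.concat_eq_append]
    exact hq.concat (hk.not_mem_support hq hi hv.ne) hv
  have hedge : (Walk.cons hv .nil : G.Walk v k).IsPath := by simp [hv.ne]
  rw [pathVec_append hG.isAcyclic hqk, pathVec_eq_of_isPath hG.isAcyclic hedge]
  congr 1
  funext e
  simp [Pi.single_apply]

end Paths

section Embedding

variable {V' : Type*} {G : SimpleGraph V} {G' : SimpleGraph V'}

lemma pathVec_map (f : G →g G') (hf : Function.Injective f) (hG : G.Connected)
    (hG' : G'.IsAcyclic) (u v : V) :
    pathVec G' (f u) (f v) = Function.extend (Sym2.map f) (pathVec G u v) 0 := by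
  have hp := (hG u v).some.bypass_isPath
  rw [pathVec_eq_of_isPath hG' (hp.map hf), pathVec_eq_of_isPath (hG'.comap f hf) hp]
  funext e'
  by_cases he : ∃ e, Sym2.map f e = e'
  · obtain ⟨e, rfl⟩ := he
    simp only [(Sym2.map.injective hf).extend_apply, Walk.edges_map,
      List.mem_map_of_injective (Sym2.map.injective hf)]
  · rw [Function.extend_apply' _ _ _ he, Walk.edges_map, if_neg]
    · rfl
    · intro h
      obtain ⟨e, -, rfl⟩ := List.mem_map.1 h
      exact he ⟨e, rfl⟩

lemma SimpleGraph.Walk.IsPath.append_map {V₂ : Type*} {G₂ : SimpleGraph V₂} (f : G →g G')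
    (f₂ : G₂ →g G') (hf : Function.Injective f) (hf₂ : Function.Injective f₂) {a b : V}
    {c d : V₂} {p : G.Walk a b} {q : G₂.Walk c d} (hp : p.IsPath) (hq : q.IsPath)
    (hcb : f₂ c = f b) (hpq : ∀ x ∈ p.support, ∀ y ∈ q.support, f x = f₂ y → y = c) :
    ((p.map f).append ((q.map f₂).copy hcb rfl)).IsPath := by
  have hc : c ∉ q.support.tail :=
    (List.nodup_cons.1 (q.cons_tail_support ▸ hq.support_nodup)).1
  rw [Walk.isPath_def, Walk.support_append, Walk.support_copy, Walk.support_map,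
    Walk.support_map, ← List.map_tail, List.nodup_append]
  refine ⟨hp.support_nodup.map hf, (hq.support_nodup.sublist (List.tail_sublist _)).map hf₂, ?_⟩
  rintro _ hfx _ hfy rfl
  obtain ⟨x, hx, rfl⟩ := List.mem_map.1 hfx
  obtain ⟨y, hy, hxy⟩ := List.mem_map.1 hfy
  exact hc (hpq x hx y (List.mem_of_mem_tail hy) hxy.symm ▸ hy)

lemma isLeaf_embedding_apply_iff (f : G ↪g G') {v : V}
    (hf : ∀ w, G'.Adj (f v) w → w ∈ Set.range f) : IsLeaf G' (f v) ↔ IsLeaf G v := by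
  constructor
  · rintro ⟨w', hw', huniq⟩
    obtain ⟨w, rfl⟩ := hf w' hw'
    exact ⟨w, f.map_adj_iff.1 hw', fun x hx => f.injective (huniq _ (f.map_adj_iff.2 hx))⟩
  · rintro ⟨w, hw, huniq⟩
    refine ⟨f w, f.map_adj_iff.2 hw, fun x' hx' => ?_⟩
    obtain ⟨x, rfl⟩ := hf x' hx'
    rw [huniq x (f.map_adj_iff.1 hx')]

lemma SimpleGraph.IsAcyclic.not_isCycle_of_support_subset_range (hG : G.IsAcyclic)
    (f : G ↪g G') {u : V'} {c : G'.Walk u u} (hc : ∀ x ∈ c.support, x ∈ Set.range f) :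
    ¬ c.IsCycle := by
  intro hcyc
  have hind : (c.induce _ hc).IsCycle := by
    apply Walk.IsCycle.of_map (f := (Embedding.induce (Set.range f)).toHom)
    rwa [Walk.map_induce]
  exact hG _ (hind.map (f := f.isoInduceRange.symm.toHom) f.isoInduceRange.symm.injective)

end Embedding

section PathPolytope

variable {G : SimpleGraph V}

def leafPathVecs (G : SimpleGraph V) : Set (Sym2 V → ℝ) :=
  {x | ∃ i j : V, i ≠ j ∧ IsLeaf G i ∧ IsLeaf G j ∧ x = pathVec G i j}

lemma apply_eq_zero_of_mem_leafPathVecs_union_zero {x : Sym2 V → ℝ}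
    (hx : x ∈ leafPathVecs G ∪ {0}) {e : Sym2 V} (he : e ∉ G.edgeSet) : x e = 0 := by
  rcases hx with ⟨i, j, -, -, -, rfl⟩ | rfl
  exacts [pathVec_apply_of_not_mem_edgeSet he i j, rfl]

lemma extremePoints_convexHull_eq_self_of_zero_one {ι : Type*} {S : Set (ι → ℝ)}
    (hS : ∀ x ∈ S, ∀ i, x i = 0 ∨ x i = 1) : (convexHull ℝ S).extremePoints ℝ = S := by
  refine extremePoints_convexHull_subset.antisymm fun x hx => ?_
  have hcube : convexHull ℝ S ⊆ Set.univ.pi fun _ => Set.Icc (0 : ℝ) 1 :=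
    convexHull_min (fun y hy => Set.mem_univ_pi.2 fun i => by
      rcases hS y hy i with h | h <;> simp [h]) (convex_pi fun _ _ => convex_Icc 0 1)
  refine inter_extremePoints_subset_extremePoints_of_subset hcube ⟨subset_convexHull ℝ S hx, ?_⟩
  rw [extremePoints_pi, Set.mem_univ_pi]
  intro i
  rw [Set.extremePoints_Icc zero_le_one]
  rcases hS x hx i with h | h <;> simp [h]

lemma extremePoints_convexHull_pathPolytope_union_zero (G : SimpleGraph V) :
    (convexHull ℝ (pathPolytope G ∪ {0})).extremePoints ℝ = leafPathVecs G ∪ {0} := by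
  rw [pathPolytope, convexHull_convexHull_union_left]
  refine extremePoints_convexHull_eq_self_of_zero_one ?_
  rintro x (⟨i, j, -, -, -, rfl⟩ | rfl) e
  · exact pathVec_apply_eq_zero_or_one ..
  · exact .inl rfl

end PathPolytope

section GluingMap

open Function

variable {α₁ α₂ β : Type*} (g₁ : α₁ → β) (g₂ : α₂ → β) (a₁ : α₁) (a₂ : α₂)

/-- On basis vectors: `b_e ↦ b_{g₁ e}` on the first factor and `b_e ↦ b_{g₂ e}` on the second,
except `b_{a₁}, b_{a₂} ↦ ½ b_{g₁ a₁}`. -/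
def gluingMap : ((α₁ → ℝ) × (α₂ → ℝ)) →ₗ[ℝ] (β → ℝ) :=
  ExtendByZero.linearMap ℝ g₁ ∘ₗ LinearMap.fst ℝ _ _ +
    ExtendByZero.linearMap ℝ g₂ ∘ₗ LinearMap.snd ℝ _ _ -
    LinearMap.smulRight (LinearMap.proj (R := ℝ) (φ := fun _ => ℝ) a₁ ∘ₗ LinearMap.fst ℝ _ _ +
      LinearMap.proj (R := ℝ) (φ := fun _ => ℝ) a₂ ∘ₗ LinearMap.snd ℝ _ _)
      (Pi.single (g₁ a₁) (1 / 2 : ℝ))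

def gluingDomain (E₁ : Set α₁) (E₂ : Set α₂) : Set ((α₁ → ℝ) × (α₂ → ℝ)) :=
  {p | p.1 a₁ = p.2 a₂ ∧ (∀ e ∉ E₁, p.1 e = 0) ∧ (∀ e ∉ E₂, p.2 e = 0)}

variable {g₁ g₂ a₁ a₂}

lemma gluingMap_apply (x : α₁ → ℝ) (y : α₂ → ℝ) :
    gluingMap g₁ g₂ a₁ a₂ (x, y) =
      extend g₁ x 0 + extend g₂ y 0 - (x a₁ + y a₂) • Pi.single (g₁ a₁) (1 / 2) :=
  rfl

lemma gluingMap_swap (h : g₁ a₁ = g₂ a₂) (x : α₁ → ℝ) (y : α₂ → ℝ) :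
    gluingMap g₁ g₂ a₁ a₂ (x, y) = gluingMap g₂ g₁ a₂ a₁ (y, x) := by
  simp only [gluingMap_apply, h, add_comm]

lemma gluingMap_apply_zero_right {x : α₁ → ℝ} (hx : x a₁ = 0) :
    gluingMap g₁ g₂ a₁ a₂ (x, 0) = extend g₁ x 0 := by
  simp [gluingMap_apply, hx, extend_zero]

lemma gluingMap_apply_zero_left (h : g₁ a₁ = g₂ a₂) {y : α₂ → ℝ} (hy : y a₂ = 0) :
    gluingMap g₁ g₂ a₁ a₂ (0, y) = extend g₂ y 0 := by
  rw [gluingMap_swap h, gluingMap_apply_zero_right hy]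

lemma gluingMap_apply_add_single [DecidableEq α₂] (hg₂ : Injective g₂) (h : g₁ a₁ = g₂ a₂)
    {x : α₁ → ℝ} {y : α₂ → ℝ} (hx : x a₁ = 1) (hy : y a₂ = 0) :
    gluingMap g₁ g₂ a₁ a₂ (x, y + Pi.single a₂ 1) = extend g₁ x 0 + extend g₂ y 0 := by
  have hsingle : extend g₂ (Pi.single a₂ (1 : ℝ)) 0 = Pi.single (g₁ a₁) 1 := by
    funext b
    by_cases hb : ∃ e, g₂ e = b
    · obtain ⟨e, rfl⟩ := hb
      simp [hg₂.extend_apply, h, Pi.single_apply, hg₂.eq_iff]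
    · rw [extend_apply' _ _ _ hb, h, Pi.single_eq_of_ne fun hb' => hb ⟨a₂, hb'.symm⟩]
      rfl
  have hadd : extend g₂ (y + Pi.single a₂ 1) (0 : β → ℝ) =
      extend g₂ y 0 + Pi.single (g₁ a₁) 1 := by
    simpa [hsingle] using extend_add g₂ y (Pi.single a₂ 1) (0 : β → ℝ) 0
  rw [gluingMap_apply, hadd]
  funext b
  simp only [Pi.add_apply, Pi.sub_apply, Pi.smul_apply, Pi.single_apply, smul_eq_mul, hx, hy]
  split_ifs <;> ring

lemma gluingMap_apply_apply_left (hg₁ : Injective g₁) (hg₂ : Injective g₂)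
    (h : g₁ a₁ = g₂ a₂) {x : α₁ → ℝ} {y : α₂ → ℝ} (hxy : x a₁ = y a₂) {e : α₁}
    (he : ∀ e', g₂ e' = g₁ e → e = a₁) : gluingMap g₁ g₂ a₁ a₂ (x, y) (g₁ e) = x e := by
  rw [gluingMap_apply]
  by_cases hea : e = a₁
  · rw [hea]
    have hy : extend g₂ y 0 (g₁ a₁) = y a₂ := by rw [h, hg₂.extend_apply]
    simp only [Pi.sub_apply, Pi.add_apply, Pi.smul_apply, hg₁.extend_apply, hy,
      Pi.single_eq_same, smul_eq_mul, hxy]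
    ring
  · simp only [Pi.sub_apply, Pi.add_apply, Pi.smul_apply, hg₁.extend_apply,
      extend_apply' _ _ _ fun ⟨e', he'⟩ => hea (he e' he'), Pi.single_eq_of_ne (hg₁.ne hea)]
    simp

lemma convex_gluingDomain (E₁ : Set α₁) (E₂ : Set α₂) : Convex ℝ (gluingDomain a₁ a₂ E₁ E₂) := by
  rintro ⟨x, y⟩ ⟨hxy, hx, hy⟩ ⟨x', y'⟩ ⟨hxy', hx', hy'⟩ s t - - -
  dsimp only at hxy hx hy hxy' hx' hy'
  refine ⟨?_, fun e he => ?_, fun e he => ?_⟩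
  · simp [hxy, hxy']
  · simp [hx e he, hx' e he]
  · simp [hy e he, hy' e he]

lemma gluingMap_injOn (hg₁ : Injective g₁) (hg₂ : Injective g₂) (h : g₁ a₁ = g₂ a₂)
    {E₁ : Set α₁} {E₂ : Set α₂} (hE₁ : ∀ e ∈ E₁, ∀ e', g₂ e' = g₁ e → e = a₁)
    (hE₂ : ∀ e ∈ E₂, ∀ e', g₁ e' = g₂ e → e = a₂) :
    Set.InjOn (gluingMap g₁ g₂ a₁ a₂) (gluingDomain a₁ a₂ E₁ E₂) := by
  rintro ⟨x, y⟩ ⟨hxy, hx, hy⟩ ⟨x', y'⟩ ⟨hxy', hx', hy'⟩ heq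
  refine Prod.ext (funext fun e => ?_) (funext fun e => ?_)
  · by_cases he : e ∈ E₁
    · have := congrFun heq (g₁ e)
      rwa [gluingMap_apply_apply_left hg₁ hg₂ h hxy (hE₁ e he),
        gluingMap_apply_apply_left hg₁ hg₂ h hxy' (hE₁ e he)] at this
    · exact (hx e he).trans (hx' e he).symm
  · by_cases he : e ∈ E₂
    · have := congrFun heq (g₂ e)
      rwa [gluingMap_swap h, gluingMap_swap h,
        gluingMap_apply_apply_left hg₂ hg₁ h.symm hxy.symm (hE₂ e he),
        gluingMap_apply_apply_left hg₂ hg₁ h.symm hxy'.symm (hE₂ e he)] at this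
    · exact (hy e he).trans (hy' e he).symm

end GluingMap

section GluingProjection

variable {G : SimpleGraph V}

def IsGluingProjection (G : SimpleGraph V) (e : Sym2 V) (π : (Sym2 V → ℝ) →ᵃ[ℝ] (Fin 3 → ℝ))
    (c₀ c : Fin 3 → ℝ) : Prop :=
  π 0 = c₀ ∧ ∀ i j : V, i ≠ j → IsLeaf G i → IsLeaf G j →
    π (pathVec G i j) = if onPath G i j e then ![0, 1, 0] else c

variable {k v : V} {π : (Sym2 V → ℝ) →ᵃ[ℝ] (Fin 3 → ℝ)} {c₀ c : Fin 3 → ℝ}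

lemma IsGluingProjection.apply_pathVec_to_leaf (hπ : IsGluingProjection G s(v, k) π c₀ c)
    (hG : G.IsTree) (hk : IsLeaf G k) (hv : G.Adj v k) {i : V} (hi : i ≠ k) (hLi : IsLeaf G i) :
    π (pathVec G i k) = ![0, 1, 0] := by
  rw [hπ.2 i k hi hLi hk, if_pos ((onPath_leafEdge_iff hG hk hv hi).2 (.inr rfl))]

lemma IsGluingProjection.apply_pathVec_of_ne (hπ : IsGluingProjection G s(v, k) π c₀ c)
    (hk : IsLeaf G k) {i j : V} (hij : i ≠ j) (hi : i ≠ k) (hj : j ≠ k) (hLi : IsLeaf G i)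
    (hLj : IsLeaf G j) : π (pathVec G i j) = c := by
  rw [hπ.2 i j hij hLi hLj, if_neg (hk.not_onPath hi hj v)]

lemma IsGluingProjection.apply_eq_apply_one (hπ : IsGluingProjection G s(v, k) π c₀ c)
    (hc₀ : c₀ 1 = 0) (hc : c 1 = 0) {x : Sym2 V → ℝ} (hx : x ∈ leafPathVecs G ∪ {0}) :
    x s(v, k) = π x 1 := by
  rcases hx with ⟨i, j, hij, hi, hj, rfl⟩ | rfl
  · rw [hπ.2 i j hij hi hj]
    unfold pathVec
    split_ifs <;> simp [hc]
  · simp [hπ.1, hc₀]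

lemma IsGluingProjection.cases (hπ : IsGluingProjection G s(v, k) π c₀ c) (hG : G.IsTree)
    (hk : IsLeaf G k) (hv : G.Adj v k) {x : Sym2 V → ℝ} (hx : x ∈ leafPathVecs G ∪ {0}) :
    x = 0 ∧ π x = c₀ ∨ (∃ i, i ≠ k ∧ IsLeaf G i ∧ x = pathVec G i k ∧ π x = ![0, 1, 0]) ∨
      ∃ i j, i ≠ j ∧ i ≠ k ∧ j ≠ k ∧ IsLeaf G i ∧ IsLeaf G j ∧ x = pathVec G i j ∧ π x = c := by
  rcases hx with ⟨i, j, hij, hi, hj, rfl⟩ | rfl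
  · by_cases hik : i = k
    · subst hik
      rw [pathVec_comm]
      exact .inr (.inl ⟨j, hij.symm, hj, rfl, hπ.apply_pathVec_to_leaf hG hk hv hij.symm hj⟩)
    by_cases hjk : j = k
    · subst hjk
      exact .inr (.inl ⟨i, hij, hi, rfl, hπ.apply_pathVec_to_leaf hG hk hv hij hi⟩)
    exact .inr (.inr ⟨i, j, hij, hik, hjk, hi, hj, rfl,
      hπ.apply_pathVec_of_ne hk hij hik hjk hi hj⟩)
  · exact .inl ⟨rfl, hπ.1⟩

end GluingProjection

section GlueGraph

variable {V1 V2 : Type} {G1 : SimpleGraph V1} {G2 : SimpleGraph V2} {v1 k1 : V1} {v2 k2 : V2}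

def glueInl (hv2 : v2 ≠ k2) (x : V1) : GlueV V1 V2 k1 k2 :=
  if hx : x = k1 then ⟨.inr v2, by simp, by simpa using hv2⟩
  else ⟨.inl x, by simpa using hx, by simp⟩

def glueInr (hv1 : v1 ≠ k1) (y : V2) : GlueV V1 V2 k1 k2 :=
  if hy : y = k2 then ⟨.inl v1, by simpa using hv1, by simp⟩
  else ⟨.inr y, by simp, by simpa using hy⟩

@[simp] lemma glueInl_val_self (hv2 : v2 ≠ k2) :
    (glueInl hv2 k1 : GlueV V1 V2 k1 k2).1 = .inr v2 := by
  simp [glueInl]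

@[simp] lemma glueInl_val_of_ne (hv2 : v2 ≠ k2) {x : V1} (hx : x ≠ k1) :
    (glueInl hv2 x : GlueV V1 V2 k1 k2).1 = .inl x := by
  simp [glueInl, hx]

@[simp] lemma glueInr_val_self (hv1 : v1 ≠ k1) :
    (glueInr hv1 k2 : GlueV V1 V2 k1 k2).1 = .inl v1 := by
  simp [glueInr]

@[simp] lemma glueInr_val_of_ne (hv1 : v1 ≠ k1) {y : V2} (hy : y ≠ k2) :
    (glueInr hv1 y : GlueV V1 V2 k1 k2).1 = .inr y := by
  simp [glueInr, hy]

lemma glueInl_injective (hv2 : v2 ≠ k2) :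
    Function.Injective (glueInl hv2 : V1 → GlueV V1 V2 k1 k2) := by
  intro x y hxy
  have h := congrArg Subtype.val hxy
  by_cases hx : x = k1 <;> by_cases hy : y = k1
  · rw [hx, hy]
  · simp [hx, hy] at h
  · simp [hx, hy] at h
  · simpa [hx, hy] using h

lemma glueInr_injective (hv1 : v1 ≠ k1) :
    Function.Injective (glueInr hv1 : V2 → GlueV V1 V2 k1 k2) := by
  intro x y hxy
  have h := congrArg Subtype.val hxy
  by_cases hx : x = k2 <;> by_cases hy : y = k2
  · rw [hx, hy]
  · simp [hx, hy] at h
  · simp [hx, hy] at h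
  · simpa [hx, hy] using h

lemma glueGraph_adj_glueInl (hk1 : IsLeaf G1 k1) (h1 : G1.Adj v1 k1) (hv2 : v2 ≠ k2)
    {x y : V1} :
    (glueGraph G1 G2 v1 k1 v2 k2).Adj (glueInl hv2 x) (glueInl hv2 y) ↔ G1.Adj x y := by
  change glueAdj G1 G2 v1 v2 _ _ ↔ _
  by_cases hx : x = k1 <;> by_cases hy : y = k1
  · simp [hx, hy, glueAdj]
  · simp [hx, hy, glueAdj, hk1.adj_iff h1, eq_comm]
  · simp [hx, hy, glueAdj, G1.adj_comm x, hk1.adj_iff h1]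
  · simp [hx, hy, glueAdj]

lemma glueGraph_adj_glueInr (hk2 : IsLeaf G2 k2) (h2 : G2.Adj v2 k2) (hv1 : v1 ≠ k1)
    {x y : V2} :
    (glueGraph G1 G2 v1 k1 v2 k2).Adj (glueInr hv1 x) (glueInr hv1 y) ↔ G2.Adj x y := by
  change glueAdj G1 G2 v1 v2 _ _ ↔ _
  by_cases hx : x = k2 <;> by_cases hy : y = k2
  · simp [hx, hy, glueAdj]
  · simp [hx, hy, glueAdj, hk2.adj_iff h2, eq_comm]
  · simp [hx, hy, glueAdj, G2.adj_comm x, hk2.adj_iff h2]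
  · simp [hx, hy, glueAdj]

def glueEmbInl (hk1 : IsLeaf G1 k1) (h1 : G1.Adj v1 k1) (hv2 : v2 ≠ k2) :
    G1 ↪g glueGraph G1 G2 v1 k1 v2 k2 where
  toFun := glueInl hv2
  inj' := glueInl_injective hv2
  map_rel_iff' := glueGraph_adj_glueInl hk1 h1 hv2

def glueEmbInr (hk2 : IsLeaf G2 k2) (h2 : G2.Adj v2 k2) (hv1 : v1 ≠ k1) :
    G2 ↪g glueGraph G1 G2 v1 k1 v2 k2 where
  toFun := glueInr hv1
  inj' := glueInr_injective hv1
  map_rel_iff' := glueGraph_adj_glueInr hk2 h2 hv1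

lemma glueInl_eq_glueInr_iff (hv1 : v1 ≠ k1) (hv2 : v2 ≠ k2) {x : V1} {y : V2} :
    (glueInl hv2 x : GlueV V1 V2 k1 k2) = glueInr hv1 y ↔ x = v1 ∧ y = k2 ∨ x = k1 ∧ y = v2 := by
  refine Subtype.ext_iff.trans ?_
  by_cases hx : x = k1 <;> by_cases hy : y = k2 <;> simp [hx, hy, hv1, hv2, eq_comm]

lemma glueInl_ne_glueInr (hv1 : v1 ≠ k1) (hv2 : v2 ≠ k2) {x : V1} {y : V2} (hx : x ≠ k1)
    (hy : y ≠ k2) : (glueInl hv2 x : GlueV V1 V2 k1 k2) ≠ glueInr hv1 y := fun h =>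
  ((glueInl_eq_glueInr_iff hv1 hv2).1 h).elim (fun h' => hy h'.2) fun h' => hx h'.1

lemma glueInl_self_eq_glueInr (hv1 : v1 ≠ k1) (hv2 : v2 ≠ k2) :
    (glueInl hv2 k1 : GlueV V1 V2 k1 k2) = glueInr hv1 v2 :=
  (glueInl_eq_glueInr_iff hv1 hv2).2 (.inr ⟨rfl, rfl⟩)

lemma glueInl_eq_glueInr_self (hv1 : v1 ≠ k1) (hv2 : v2 ≠ k2) :
    (glueInl hv2 v1 : GlueV V1 V2 k1 k2) = glueInr hv1 k2 :=
  (glueInl_eq_glueInr_iff hv1 hv2).2 (.inl ⟨rfl, rfl⟩)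

lemma glueV_cases (hv1 : v1 ≠ k1) (hv2 : v2 ≠ k2) (a : GlueV V1 V2 k1 k2) :
    (∃ x, x ≠ k1 ∧ glueInl hv2 x = a) ∨ ∃ y, y ≠ k2 ∧ glueInr hv1 y = a := by
  obtain ⟨x | y, hk1, hk2⟩ := a
  · have hx : x ≠ k1 := by simpa using hk1
    exact .inl ⟨x, hx, Subtype.ext (glueInl_val_of_ne hv2 hx)⟩
  · have hy : y ≠ k2 := by simpa using hk2
    exact .inr ⟨y, hy, Subtype.ext (glueInr_val_of_ne hv1 hy)⟩

lemma glueGraph_adj_mem_range_glueInl (hv2 : v2 ≠ k2) {x : V1} (hx : x ≠ k1)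
    {b : GlueV V1 V2 k1 k2} (hb : (glueGraph G1 G2 v1 k1 v2 k2).Adj (glueInl hv2 x) b) :
    b ∈ Set.range (glueInl hv2) := by
  obtain ⟨y | y, hy1, hy2⟩ := b
  · have hy : y ≠ k1 := by simpa using hy1
    exact ⟨y, Subtype.ext (glueInl_val_of_ne hv2 hy)⟩
  · have hxy : x = v1 ∧ y = v2 := by
      change glueAdj G1 G2 v1 v2 (glueInl hv2 x).1 (.inr y) at hb
      simpa [glueAdj, hx] using hb
    exact ⟨k1, Subtype.ext (by simp [hxy.2])⟩

lemma glueGraph_adj_mem_range_glueInr (hv1 : v1 ≠ k1) {y : V2} (hy : y ≠ k2)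
    {b : GlueV V1 V2 k1 k2} (hb : (glueGraph G1 G2 v1 k1 v2 k2).Adj (glueInr hv1 y) b) :
    b ∈ Set.range (glueInr hv1) := by
  obtain ⟨x | x, hx1, hx2⟩ := b
  · have hxy : y = v2 ∧ x = v1 := by
      change glueAdj G1 G2 v1 v2 (glueInr hv1 y).1 (.inl x) at hb
      simpa [glueAdj, hy] using hb
    exact ⟨k2, Subtype.ext (by simp [hxy.2])⟩
  · have hx : x ≠ k2 := by simpa using hx2
    exact ⟨x, Subtype.ext (glueInr_val_of_ne hv1 hx)⟩

lemma isLeaf_glueInl_iff (hk1 : IsLeaf G1 k1) (h1 : G1.Adj v1 k1) (hv2 : v2 ≠ k2) {x : V1}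
    (hx : x ≠ k1) : IsLeaf (glueGraph G1 G2 v1 k1 v2 k2) (glueInl hv2 x) ↔ IsLeaf G1 x :=
  isLeaf_embedding_apply_iff (glueEmbInl hk1 h1 hv2)
    fun _ hb => glueGraph_adj_mem_range_glueInl hv2 hx hb

lemma isLeaf_glueInr_iff (hk2 : IsLeaf G2 k2) (h2 : G2.Adj v2 k2) (hv1 : v1 ≠ k1) {y : V2}
    (hy : y ≠ k2) : IsLeaf (glueGraph G1 G2 v1 k1 v2 k2) (glueInr hv1 y) ↔ IsLeaf G2 y :=
  isLeaf_embedding_apply_iff (glueEmbInr hk2 h2 hv1)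
    fun _ hb => glueGraph_adj_mem_range_glueInr hv1 hy hb

lemma glueGraph_adj_eq_bridge (hv1 : v1 ≠ k1) (hv2 : v2 ≠ k2) {a c : GlueV V1 V2 k1 k2}
    (h : (glueGraph G1 G2 v1 k1 v2 k2).Adj a c) (hac : a.1.isLeft ≠ c.1.isLeft) :
    s(a, c) = s(glueInl hv2 v1, glueInl hv2 k1) := by
  obtain ⟨x | x, hx⟩ := a <;> obtain ⟨y | y, hy⟩ := c
  · simp at hac
  · obtain ⟨rfl, rfl⟩ : x = v1 ∧ y = v2 := h
    exact Sym2.eq_iff.2 (.inl ⟨Subtype.ext (by simp [hv1]), Subtype.ext (by simp)⟩)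
  · obtain ⟨rfl, rfl⟩ : x = v2 ∧ y = v1 := h
    exact Sym2.eq_iff.2 (.inr ⟨Subtype.ext (by simp), Subtype.ext (by simp [hv1])⟩)
  · simp at hac

lemma glueGraph_bridge_mem_edges (hv1 : v1 ≠ k1) (hv2 : v2 ≠ k2) :
    ∀ {a b : GlueV V1 V2 k1 k2} (p : (glueGraph G1 G2 v1 k1 v2 k2).Walk a b),
      a.1.isLeft ≠ b.1.isLeft → s(glueInl hv2 v1, glueInl hv2 k1) ∈ p.edges
  | _, _, .nil, hab => absurd rfl hab
  | a, b, .cons (v := c) hac q, hab => by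
    rw [Walk.edges_cons, List.mem_cons]
    by_cases hc : a.1.isLeft = c.1.isLeft
    · exact .inr (glueGraph_bridge_mem_edges hv1 hv2 q (hc ▸ hab))
    · exact .inl (glueGraph_adj_eq_bridge hv1 hv2 hac hc).symm

/-- The new edge `{v1, v2}` is a bridge, and a cycle avoiding it stays in one of the two
embedded copies of `G1` and `G2`. -/
lemma glueGraph_isAcyclic (hG1 : G1.IsAcyclic) (hG2 : G2.IsAcyclic) (hk1 : IsLeaf G1 k1)
    (h1 : G1.Adj v1 k1) (hk2 : IsLeaf G2 k2) (h2 : G2.Adj v2 k2) :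
    (glueGraph G1 G2 v1 k1 v2 k2).IsAcyclic := by
  intro u c hc
  by_cases hb : s(glueInl h2.ne v1, glueInl h2.ne k1) ∈ c.edges
  · have hbridge : (glueGraph G1 G2 v1 k1 v2 k2).IsBridge
        s(glueInl h2.ne v1, glueInl h2.ne k1) :=
      isBridge_iff_forall_walk_mem_edges.2 fun p =>
        glueGraph_bridge_mem_edges h1.ne h2.ne p (by simp [h1.ne])
    exact (isBridge_iff_forall_cycle_notMem ((glueGraph_adj_glueInl hk1 h1 h2.ne).2 h1)).1
      hbridge c hc hb
  have hside : ∀ x ∈ c.support, x.1.isLeft = u.1.isLeft := fun x hx => by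
    by_contra hne
    exact hb (c.edges_takeUntil_subset_edges hx
      (glueGraph_bridge_mem_edges h1.ne h2.ne (c.takeUntil x hx) (Ne.symm hne)))
  cases hu : u.1.isLeft
  · refine hG2.not_isCycle_of_support_subset_range (glueEmbInr hk2 h2 h1.ne)
      (fun x hx => ?_) hc
    obtain ⟨x, hx1, rfl⟩ | ⟨y, -, rfl⟩ := glueV_cases h1.ne h2.ne x
    · simpa [hx1, hu] using hside _ hx
    · exact ⟨y, rfl⟩
  · refine hG1.not_isCycle_of_support_subset_range (glueEmbInl hk1 h1 h2.ne)
      (fun x hx => ?_) hc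
    obtain ⟨x, -, rfl⟩ | ⟨y, hy2, rfl⟩ := glueV_cases h1.ne h2.ne x
    · exact ⟨x, rfl⟩
    · simpa [hy2, hu] using hside _ hx

end GlueGraph

section GlueMap

variable {V1 V2 : Type} {G1 : SimpleGraph V1} {G2 : SimpleGraph V2} {v1 k1 : V1} {v2 k2 : V2}

def glueMap (hv1 : v1 ≠ k1) (hv2 : v2 ≠ k2) :
    ((Sym2 V1 → ℝ) × (Sym2 V2 → ℝ)) →ₗ[ℝ] (Sym2 (GlueV V1 V2 k1 k2) → ℝ) :=
  gluingMap (Sym2.map (glueInl hv2)) (Sym2.map (glueInr hv1)) s(v1, k1) s(v2, k2)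

lemma map_glueInl_leafEdge_eq (hv1 : v1 ≠ k1) (hv2 : v2 ≠ k2) :
    Sym2.map (glueInl hv2 : V1 → GlueV V1 V2 k1 k2) s(v1, k1) =
      Sym2.map (glueInr hv1) s(v2, k2) := by
  rw [Sym2.map_mk, Sym2.map_mk, glueInl_self_eq_glueInr hv1 hv2,
    glueInl_eq_glueInr_self hv1 hv2, Sym2.eq_swap]

lemma eq_leafEdge_of_map_glueInr_eq (hv1 : v1 ≠ k1) (hv2 : v2 ≠ k2) (e : Sym2 V1)
    (he : e ∈ G1.edgeSet) (e' : Sym2 V2)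
    (h : Sym2.map (glueInr hv1) e' = Sym2.map (glueInl hv2 : V1 → GlueV V1 V2 k1 k2) e) :
    e = s(v1, k1) := by
  induction e with | _ a b =>
  induction e' with | _ c d =>
  have hab : a ≠ b := G1.ne_of_adj he
  simp only [Sym2.map_mk, Sym2.eq_iff, eq_comm (a := glueInr hv1 _),
    glueInl_eq_glueInr_iff hv1 hv2] at h
  rw [Sym2.eq_iff]
  grind

lemma eq_leafEdge_of_map_glueInl_eq (hv1 : v1 ≠ k1) (hv2 : v2 ≠ k2) (e : Sym2 V2)
    (he : e ∈ G2.edgeSet) (e' : Sym2 V1)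
    (h : Sym2.map (glueInl hv2) e' = Sym2.map (glueInr hv1 : V2 → GlueV V1 V2 k1 k2) e) :
    e = s(v2, k2) := by
  induction e with | _ a b =>
  induction e' with | _ c d =>
  have hab : a ≠ b := G2.ne_of_adj he
  simp only [Sym2.map_mk, Sym2.eq_iff, glueInl_eq_glueInr_iff hv1 hv2] at h
  rw [Sym2.eq_iff]
  grind

lemma glueMap_pathVec_left (hG1 : G1.Connected) (hH : (glueGraph G1 G2 v1 k1 v2 k2).IsAcyclic)
    (hk1 : IsLeaf G1 k1) (h1 : G1.Adj v1 k1) (hv2 : v2 ≠ k2) {i j : V1} (hi : i ≠ k1)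
    (hj : j ≠ k1) :
    glueMap h1.ne hv2 (pathVec G1 i j, 0) =
      pathVec (glueGraph G1 G2 v1 k1 v2 k2) (glueInl hv2 i) (glueInl hv2 j) := by
  have h0 : pathVec G1 i j s(v1, k1) = 0 := if_neg (hk1.not_onPath hi hj v1)
  rw [glueMap, gluingMap_apply_zero_right h0]
  exact (pathVec_map (glueEmbInl hk1 h1 hv2).toHom (glueInl_injective hv2) hG1 hH i j).symm

lemma glueMap_pathVec_right (hG2 : G2.Connected) (hH : (glueGraph G1 G2 v1 k1 v2 k2).IsAcyclic)
    (hk2 : IsLeaf G2 k2) (h2 : G2.Adj v2 k2) (hv1 : v1 ≠ k1) {l m : V2} (hl : l ≠ k2)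
    (hm : m ≠ k2) :
    glueMap hv1 h2.ne (0, pathVec G2 l m) =
      pathVec (glueGraph G1 G2 v1 k1 v2 k2) (glueInr hv1 l) (glueInr hv1 m) := by
  have h0 : pathVec G2 l m s(v2, k2) = 0 := if_neg (hk2.not_onPath hl hm v2)
  rw [glueMap, gluingMap_apply_zero_left (map_glueInl_leafEdge_eq hv1 h2.ne) h0]
  exact (pathVec_map (glueEmbInr hk2 h2 hv1).toHom (glueInr_injective hv1) hG2 hH l m).symm

/-- The glued path `i ↔ l` is the image of the `G1`-path `i ↔ k1` (ending in the new edge)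
followed by the `G2`-path `v2 ↔ l`, while the `G2`-path `l ↔ k2` contributes the new edge a second
time: this is what the halving compensates. -/
lemma glueMap_pathVec_cross (hG1 : G1.IsTree) (hG2 : G2.IsTree)
    (hH : (glueGraph G1 G2 v1 k1 v2 k2).IsAcyclic) (hk1 : IsLeaf G1 k1) (h1 : G1.Adj v1 k1)
    (hk2 : IsLeaf G2 k2) (h2 : G2.Adj v2 k2) {i : V1} {l : V2} (hi : i ≠ k1) (hl : l ≠ k2) :
    glueMap h1.ne h2.ne (pathVec G1 i k1, pathVec G2 l k2) =
      pathVec (glueGraph G1 G2 v1 k1 v2 k2) (glueInl h2.ne i) (glueInr h1.ne l) := by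
  obtain ⟨p, hp, -⟩ := hG1.existsUnique_path i k1
  obtain ⟨q, hq, -⟩ := hG2.existsUnique_path v2 l
  have hpq := hp.append_map (glueEmbInl hk1 h1 h2.ne).toHom (glueEmbInr hk2 h2 h1.ne).toHom
    (glueInl_injective h2.ne) (glueInr_injective h1.ne) hq
    (glueInl_self_eq_glueInr h1.ne h2.ne).symm fun x _ y hy hxy =>
      ((glueInl_eq_glueInr_iff h1.ne h2.ne).1 hxy).elim
        (fun h => absurd (h.2 ▸ hy) (hk2.not_mem_support hq h2.ne hl)) (·.2)
  have hsplit : pathVec (glueGraph G1 G2 v1 k1 v2 k2) (glueInl h2.ne i) (glueInr h1.ne l) =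
      pathVec _ (glueInl h2.ne i) (glueInl h2.ne k1) +
        pathVec _ (glueInl h2.ne k1) (glueInr h1.ne l) :=
    pathVec_append hH hpq
  have hleft : pathVec (glueGraph G1 G2 v1 k1 v2 k2) (glueInl h2.ne i) (glueInl h2.ne k1) =
      Function.extend (Sym2.map (glueInl h2.ne)) (pathVec G1 i k1) 0 :=
    pathVec_map (glueEmbInl hk1 h1 h2.ne).toHom (glueInl_injective h2.ne) hG1.connected hH i k1
  have hright : pathVec (glueGraph G1 G2 v1 k1 v2 k2) (glueInl h2.ne k1) (glueInr h1.ne l) =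
      Function.extend (Sym2.map (glueInr h1.ne)) (pathVec G2 l v2) 0 := by
    rw [glueInl_self_eq_glueInr h1.ne h2.ne, pathVec_comm l]
    exact pathVec_map (glueEmbInr hk2 h2 h1.ne).toHom (glueInr_injective h1.ne) hG2.connected
      hH v2 l
  have hx : pathVec G1 i k1 s(v1, k1) = 1 :=
    if_pos ((onPath_leafEdge_iff hG1 hk1 h1 hi).2 (.inr rfl))
  have hy : pathVec G2 l v2 s(v2, k2) = 0 := if_neg (hk2.not_onPath hl h2.ne v2)
  rw [hk2.pathVec_eq_add_single hG2 h2 hl, glueMap,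
    gluingMap_apply_add_single (Sym2.map.injective (glueInr_injective h1.ne))
      (map_glueInl_leafEdge_eq h1.ne h2.ne) hx hy, hsplit, hleft, hright]

end GlueMap

def matchingPairs {E1 E2 F : Type*} [AddCommGroup E1] [Module ℝ E1] [AddCommGroup E2]
    [Module ℝ E2] [AddCommGroup F] [Module ℝ F] (π1 : E1 →ᵃ[ℝ] F) (π2 : E2 →ᵃ[ℝ] F)
    (A : Set E1) (B : Set E2) : Set (E1 × E2) :=
  {p | p.1 ∈ A ∧ p.2 ∈ B ∧ π1 p.1 = π2 p.2}

section GlueImage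

variable {V1 V2 : Type} {G1 : SimpleGraph V1} {G2 : SimpleGraph V2} {v1 k1 : V1} {v2 k2 : V2}
  {π1 : (Sym2 V1 → ℝ) →ᵃ[ℝ] (Fin 3 → ℝ)} {π2 : (Sym2 V2 → ℝ) →ᵃ[ℝ] (Fin 3 → ℝ)}

lemma glueMap_image_matchingPairs_subset (hG1 : G1.IsTree) (hG2 : G2.IsTree)
    (hk1 : IsLeaf G1 k1) (hk2 : IsLeaf G2 k2) (h1 : G1.Adj v1 k1) (h2 : G2.Adj v2 k2)
    (hπ1 : IsGluingProjection G1 s(v1, k1) π1 ![0, 0, 1] ![1, 0, 0])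
    (hπ2 : IsGluingProjection G2 s(v2, k2) π2 ![1, 0, 0] ![0, 0, 1]) :
    glueMap h1.ne h2.ne '' matchingPairs π1 π2 (leafPathVecs G1 ∪ {0}) (leafPathVecs G2 ∪ {0})
      ⊆ leafPathVecs (glueGraph G1 G2 v1 k1 v2 k2) := by
  have hH := glueGraph_isAcyclic hG1.isAcyclic hG2.isAcyclic hk1 h1 hk2 h2
  rintro _ ⟨⟨x, y⟩, ⟨hx, hy, hxy⟩, rfl⟩
  rcases hπ1.cases hG1 hk1 h1 hx with ⟨rfl, hπx⟩ | ⟨i, hi, hLi, rfl, hπx⟩ |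
    ⟨i, j, hij, hi, hj, hLi, hLj, rfl, hπx⟩ <;>
  rcases hπ2.cases hG2 hk2 h2 hy with ⟨rfl, hπy⟩ | ⟨l, hl, hLl, rfl, hπy⟩ |
    ⟨l, m, hlm, hl, hm, hLl, hLm, rfl, hπy⟩ <;>
  rw [hπx, hπy] at hxy <;> try simp at hxy
  · exact ⟨_, _, fun h => hlm (glueInr_injective h1.ne h),
      (isLeaf_glueInr_iff hk2 h2 h1.ne hl).2 hLl, (isLeaf_glueInr_iff hk2 h2 h1.ne hm).2 hLm,
      glueMap_pathVec_right hG2.connected hH hk2 h2 h1.ne hl hm⟩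
  · exact ⟨_, _, glueInl_ne_glueInr h1.ne h2.ne hi hl,
      (isLeaf_glueInl_iff hk1 h1 h2.ne hi).2 hLi, (isLeaf_glueInr_iff hk2 h2 h1.ne hl).2 hLl,
      glueMap_pathVec_cross hG1 hG2 hH hk1 h1 hk2 h2 hi hl⟩
  · exact ⟨_, _, fun h => hij (glueInl_injective h2.ne h),
      (isLeaf_glueInl_iff hk1 h1 h2.ne hi).2 hLi, (isLeaf_glueInl_iff hk1 h1 h2.ne hj).2 hLj,
      glueMap_pathVec_left hG1.connected hH hk1 h1 h2.ne hi hj⟩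

lemma leafPathVecs_glueGraph_subset_image (hG1 : G1.IsTree) (hG2 : G2.IsTree)
    (hk1 : IsLeaf G1 k1) (hk2 : IsLeaf G2 k2) (h1 : G1.Adj v1 k1) (h2 : G2.Adj v2 k2)
    (hπ1 : IsGluingProjection G1 s(v1, k1) π1 ![0, 0, 1] ![1, 0, 0])
    (hπ2 : IsGluingProjection G2 s(v2, k2) π2 ![1, 0, 0] ![0, 0, 1]) :
    leafPathVecs (glueGraph G1 G2 v1 k1 v2 k2) ⊆
      glueMap h1.ne h2.ne '' matchingPairs π1 π2 (leafPathVecs G1 ∪ {0})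
        (leafPathVecs G2 ∪ {0}) := by
  have hH := glueGraph_isAcyclic hG1.isAcyclic hG2.isAcyclic hk1 h1 hk2 h2
  have hcross : ∀ i l, i ≠ k1 → l ≠ k2 → IsLeaf G1 i → IsLeaf G2 l →
      pathVec (glueGraph G1 G2 v1 k1 v2 k2) (glueInl h2.ne i) (glueInr h1.ne l) ∈
        glueMap h1.ne h2.ne '' matchingPairs π1 π2 (leafPathVecs G1 ∪ {0})
          (leafPathVecs G2 ∪ {0}) :=
    fun i l hi hl hLi hLl => ⟨(pathVec G1 i k1, pathVec G2 l k2),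
      ⟨.inl ⟨i, k1, hi, hLi, hk1, rfl⟩, .inl ⟨l, k2, hl, hLl, hk2, rfl⟩,
        by rw [hπ1.apply_pathVec_to_leaf hG1 hk1 h1 hi hLi,
          hπ2.apply_pathVec_to_leaf hG2 hk2 h2 hl hLl]⟩,
      glueMap_pathVec_cross hG1 hG2 hH hk1 h1 hk2 h2 hi hl⟩
  rintro _ ⟨I, J, hIJ, hI, hJ, rfl⟩
  rcases glueV_cases h1.ne h2.ne I with ⟨i, hi, rfl⟩ | ⟨l, hl, rfl⟩ <;>
  rcases glueV_cases h1.ne h2.ne J with ⟨j, hj, rfl⟩ | ⟨m, hm, rfl⟩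
  · rw [isLeaf_glueInl_iff hk1 h1 h2.ne hi] at hI
    rw [isLeaf_glueInl_iff hk1 h1 h2.ne hj] at hJ
    have hij : i ≠ j := ne_of_apply_ne _ hIJ
    exact ⟨(pathVec G1 i j, 0), ⟨.inl ⟨i, j, hij, hI, hJ, rfl⟩, .inr rfl,
      by rw [hπ1.apply_pathVec_of_ne hk1 hij hi hj hI hJ, hπ2.1]⟩,
      glueMap_pathVec_left hG1.connected hH hk1 h1 h2.ne hi hj⟩
  · exact hcross i m hi hm ((isLeaf_glueInl_iff hk1 h1 h2.ne hi).1 hI)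
      ((isLeaf_glueInr_iff hk2 h2 h1.ne hm).1 hJ)
  · rw [pathVec_comm]
    exact hcross j l hj hl ((isLeaf_glueInl_iff hk1 h1 h2.ne hj).1 hJ)
      ((isLeaf_glueInr_iff hk2 h2 h1.ne hl).1 hI)
  · rw [isLeaf_glueInr_iff hk2 h2 h1.ne hl] at hI
    rw [isLeaf_glueInr_iff hk2 h2 h1.ne hm] at hJ
    have hlm : l ≠ m := ne_of_apply_ne _ hIJ
    exact ⟨(0, pathVec G2 l m), ⟨.inr rfl, .inl ⟨l, m, hlm, hI, hJ, rfl⟩,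
      by rw [hπ2.apply_pathVec_of_ne hk2 hlm hl hm hI hJ, hπ1.1]⟩,
      glueMap_pathVec_right hG2.connected hH hk2 h2 h1.ne hl hm⟩

/-- Matched projections agree in the middle coordinate, which reads off `x_{e1}` and `y_{e2}`. -/
lemma matchingPairs_subset_gluingDomain
    (hπ1 : IsGluingProjection G1 s(v1, k1) π1 ![0, 0, 1] ![1, 0, 0])
    (hπ2 : IsGluingProjection G2 s(v2, k2) π2 ![1, 0, 0] ![0, 0, 1]) :
    matchingPairs π1 π2 (leafPathVecs G1 ∪ {0}) (leafPathVecs G2 ∪ {0}) ⊆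
      gluingDomain s(v1, k1) s(v2, k2) G1.edgeSet G2.edgeSet := by
  rintro ⟨x, y⟩ ⟨hx, hy, hxy⟩
  refine ⟨?_, fun e => apply_eq_zero_of_mem_leafPathVecs_union_zero hx,
    fun e => apply_eq_zero_of_mem_leafPathVecs_union_zero hy⟩
  rw [hπ1.apply_eq_apply_one (by simp) (by simp) hx,
    hπ2.apply_eq_apply_one (by simp) (by simp) hy, hxy]

end GlueImage

theorem pathPolytope_gluing_tfp_general {V1 V2 : Type}
    (G1 : SimpleGraph V1) (G2 : SimpleGraph V2)
    (hG1 : G1.IsTree) (hG2 : G2.IsTree)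
    (v1 k1 : V1) (v2 k2 : V2)
    (hk1 : IsLeaf G1 k1) (hk2 : IsLeaf G2 k2)
    (h1 : G1.Adj v1 k1) (h2 : G2.Adj v2 k2)
    (π1 : (Sym2 V1 → ℝ) →ᵃ[ℝ] (Fin 3 → ℝ)) (π2 : (Sym2 V2 → ℝ) →ᵃ[ℝ] (Fin 3 → ℝ))
    (hπ10 : π1 0 = ![0, 0, 1]) (hπ20 : π2 0 = ![1, 0, 0])
    (hπ1 : ∀ i j : V1, i ≠ j → IsLeaf G1 i → IsLeaf G1 j →
      π1 (pathVec G1 i j) = if onPath G1 i j s(v1, k1) then ![0, 1, 0] else ![1, 0, 0])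
    (hπ2 : ∀ i j : V2, i ≠ j → IsLeaf G2 i → IsLeaf G2 j →
      π2 (pathVec G2 i j) = if onPath G2 i j s(v2, k2) then ![0, 1, 0] else ![0, 0, 1]) :
    ∃ φ : ((Sym2 V1 → ℝ) × (Sym2 V2 → ℝ)) →ᵃ[ℝ] (Sym2 (GlueV V1 V2 k1 k2) → ℝ),
      Set.InjOn φ (tfp π1 π2 (convexHull ℝ (pathPolytope G1 ∪ {0}))
        (convexHull ℝ (pathPolytope G2 ∪ {0}))) ∧
      φ '' tfp π1 π2 (convexHull ℝ (pathPolytope G1 ∪ {0}))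
          (convexHull ℝ (pathPolytope G2 ∪ {0}))
        = pathPolytope (glueGraph G1 G2 v1 k1 v2 k2) := by
  have hP1 : IsGluingProjection G1 s(v1, k1) π1 ![0, 0, 1] ![1, 0, 0] := ⟨hπ10, hπ1⟩
  have hP2 : IsGluingProjection G2 s(v2, k2) π2 ![1, 0, 0] ![0, 0, 1] := ⟨hπ20, hπ2⟩
  have htfp : tfp π1 π2 (convexHull ℝ (pathPolytope G1 ∪ {0}))
      (convexHull ℝ (pathPolytope G2 ∪ {0})) =
      convexHull ℝ (matchingPairs π1 π2 (leafPathVecs G1 ∪ {0}) (leafPathVecs G2 ∪ {0})) := by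
    rw [tfp, extremePoints_convexHull_pathPolytope_union_zero,
      extremePoints_convexHull_pathPolytope_union_zero]
    rfl
  refine ⟨(glueMap h1.ne h2.ne).toAffineMap, ?_, ?_⟩
  · rw [htfp]
    exact (gluingMap_injOn (Sym2.map.injective (glueInl_injective h2.ne))
      (Sym2.map.injective (glueInr_injective h1.ne)) (map_glueInl_leafEdge_eq h1.ne h2.ne)
      (eq_leafEdge_of_map_glueInr_eq h1.ne h2.ne) (eq_leafEdge_of_map_glueInl_eq h1.ne h2.ne)).mono
      (convexHull_min (matchingPairs_subset_gluingDomain hP1 hP2) (convex_gluingDomain _ _))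
  · rw [htfp, AffineMap.image_convexHull]
    exact congrArg (convexHull ℝ)
      ((glueMap_image_matchingPairs_subset hG1 hG2 hk1 hk2 h1 h2 hP1 hP2).antisymm
        (leafPathVecs_glueGraph_subset_image hG1 hG2 hk1 hk2 h1 h2 hP1 hP2))

/-- For a gluing `T = T1 *_{e1,e2} T2` of trees along leaf edges, and any
pair of gluing integral projections `π1, π2` onto `Δ₃`, the path polytope `P_T` is affinely
isomorphic to the toric fiber product `(P_{T1} ∨̂ {0}) ×_{Δ₃} (P_{T2} ∨̂ {0})`. -/
theorem pathPolytope_gluing_tfp {V1 V2 : Type} [Fintype V1] [Fintype V2]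
    (G1 : SimpleGraph V1) (G2 : SimpleGraph V2)
    (hG1 : G1.IsTree) (hG2 : G2.IsTree)
    (v1 k1 : V1) (v2 k2 : V2)
    (hk1 : IsLeaf G1 k1) (hk2 : IsLeaf G2 k2)
    (h1 : G1.Adj v1 k1) (h2 : G2.Adj v2 k2)
    (π1 : (Sym2 V1 → ℝ) →ᵃ[ℝ] (Fin 3 → ℝ)) (π2 : (Sym2 V2 → ℝ) →ᵃ[ℝ] (Fin 3 → ℝ))
    (hπ10 : π1 0 = ![0, 0, 1]) (hπ20 : π2 0 = ![1, 0, 0])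
    (hπ1 : ∀ i j : V1, i ≠ j → IsLeaf G1 i → IsLeaf G1 j →
      π1 (pathVec G1 i j) = if onPath G1 i j s(v1, k1) then ![0, 1, 0] else ![1, 0, 0])
    (hπ2 : ∀ i j : V2, i ≠ j → IsLeaf G2 i → IsLeaf G2 j →
      π2 (pathVec G2 i j) = if onPath G2 i j s(v2, k2) then ![0, 1, 0] else ![0, 0, 1]) :
    ∃ φ : ((Sym2 V1 → ℝ) × (Sym2 V2 → ℝ)) →ᵃ[ℝ] (Sym2 (GlueV V1 V2 k1 k2) → ℝ),
      Set.InjOn φ (tfp π1 π2 (convexHull ℝ (pathPolytope G1 ∪ {0}))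
        (convexHull ℝ (pathPolytope G2 ∪ {0}))) ∧
      φ '' tfp π1 π2 (convexHull ℝ (pathPolytope G1 ∪ {0}))
          (convexHull ℝ (pathPolytope G2 ∪ {0}))
        = pathPolytope (glueGraph G1 G2 v1 k1 v2 k2) :=
  pathPolytope_gluing_tfp_general G1 G2 hG1 hG2 v1 k1 v2 k2 hk1 hk2 h1 h2 π1 π2 hπ10 hπ20 hπ1 hπ2
end
end

section
/- Let T = (V,E) be a tree with |V| > 3 and no internal vertex of degree 2. Then the set { x ∈ ℝ^E : x_e ≥ 0 for all e ∈ E with neither endpoint of degree 3; −x_{{u,v}} + ∑_{w ∈ N(u)\{v}} x_{{u,w}} ≥ 0 for all internal u and v ∈ N(u); ∑_{e ∈ E_leaf(T)} x_e = 2 } equals the path polytope P_T. -/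
open Classical SimpleGraph

noncomputable section

variable {V : Type*}

/-- A face of `P`: the intersection of `P` with the boundary hyperplane of a valid
linear inequality. -/
def IsFaceOf {E : Type*} [AddCommGroup E] [Module ℝ E] (P F : Set E) : Prop :=
  ∃ (a : E →ₗ[ℝ] ℝ) (b : ℝ), (∀ x ∈ P, a x ≤ b) ∧ F = {x ∈ P | a x = b}

/-- The dimension of a polytope: the rank of the direction of its affine span. -/
def polyDim {E : Type*} [AddCommGroup E] [Module ℝ E] (P : Set E) : ℕ :=
  Module.finrank ℝ (affineSpan ℝ P).direction

/-- A facet: a face of dimension `dim P − 1`. -/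
def IsFacetOf {E : Type*} [AddCommGroup E] [Module ℝ E] (P F : Set E) : Prop :=
  IsFaceOf P F ∧ polyDim F + 1 = polyDim P

/-!
Every path vector satisfies the inequalities, so `P_T` lies in the polyhedron. Conversely, let
`x` satisfy them; the two vertex inequalities at a vertex of degree 3 force `x ≥ 0` on all its
edges, so `x ≥ 0` everywhere. Starting from a positive edge, grow a path by leaving each vertex
through a positive edge, namely through the one whose vertex inequality is tight if there is
such an edge (there is at most one besides the incoming edge); in a tree the path ends at two
leaves. Subtracting from `x` the largest multiple of this path's vector that keeps the
homogeneous inequalities makes one more of them tight and keeps the tight ones tight, so by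
induction on the number of non-tight inequalities `x` is a nonnegative combination of path
vectors. The equation `∑_{E_leaf} x_e = 2`, which holds for every path vector, makes this
combination convex.
-/

open Finset
open scoped Pointwise

section Paths

variable {G : SimpleGraph V} {a b : V}

theorem IsLeaf.eq_of_adj {v w w' : V} (hv : IsLeaf G v) (hw : G.Adj v w) (hw' : G.Adj v w') :
    w = w' :=
  hv.unique hw hw'

theorem isLeaf_iff_degree_eq_one [Fintype V] {v : V} : IsLeaf G v ↔ G.degree v = 1 :=
  degree_eq_one_iff_existsUnique_adj.symm

theorem ncard_neighborSet_eq_degree [Fintype V] (v : V) :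
    (G.neighborSet v).ncard = G.degree v := by
  rw [← card_neighborFinset_eq_degree, ← Set.ncard_coe_finset, coe_neighborFinset]

theorem IsLeaf.not_adj [Fintype V] (hG : G.Connected) (hV : 2 < Fintype.card V) {i j : V}
    (hi : IsLeaf G i) (hj : IsLeaf G j) : ¬ G.Adj i j := by
  intro hij
  -- two adjacent leaves would form a whole connected component
  have closed : ∀ {u z : V} (p : G.Walk u z), (u = i ∨ u = j) → z = i ∨ z = j := by
    intro u z p
    induction p with
    | nil => exact id
    | cons h _ ih =>
      rintro (rfl | rfl)
      exacts [ih (Or.inr (hi.eq_of_adj h hij)), ih (Or.inl (hj.eq_of_adj h hij.symm))]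
  have hsub : (univ : Finset V) ⊆ {i, j} := fun z _ => by
    simpa using closed (hG.preconnected i z).some (Or.inl rfl)
  have := (card_le_card hsub).trans (card_insert_le i {j})
  simp only [card_univ, card_singleton] at this
  omega

theorem IsLeaf.mk_mem_edges {p : G.Walk a b} (hp : ¬ p.Nil) (ha : IsLeaf G a) {w : V}
    (haw : G.Adj a w) : s(a, w) ∈ p.edges := by
  cases p with
  | nil => simp at hp
  | cons h p => simp [ha.eq_of_adj haw h]

theorem pathVec_eq_ite (hG : G.IsAcyclic) {p : G.Walk a b} (hp : p.IsPath) (e : Sym2 V) :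
    pathVec G a b e = if e ∈ p.edges then 1 else 0 := by
  have hon : onPath G a b e ↔ e ∈ p.edges := by
    refine ⟨fun ⟨q, hq, he⟩ => ?_, fun he => ⟨p, hp, he⟩⟩
    obtain rfl : q = p := Subtype.mk.inj ((hG.subsingleton_path a b).elim ⟨q, hq⟩ ⟨p, hp⟩)
    exact he
  simp only [pathVec, hon]

theorem pathVec_eq_zero_of_notMem {e : Sym2 V} (he : e ∉ G.edgeSet) : pathVec G a b e = 0 :=
  if_neg fun ⟨p, _, hp⟩ => he (p.edges_subset_edgeSet hp)

end Paths

section VertexSlack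

variable [Fintype V] {G : SimpleGraph V}

def vertexSlack (G : SimpleGraph V) (u v : V) : (Sym2 V → ℝ) →ₗ[ℝ] ℝ :=
  ∑ w ∈ (G.neighborFinset u).erase v, LinearMap.proj s(u, w) - LinearMap.proj s(u, v)

theorem vertexSlack_apply (u v : V) (x : Sym2 V → ℝ) :
    vertexSlack G u v x = ∑ w ∈ (G.neighborFinset u).erase v, x s(u, w) - x s(u, v) := by
  simp [vertexSlack]

theorem vertexSlack_eq_sum_sub {u v : V} (huv : G.Adj u v) (x : Sym2 V → ℝ) :
    vertexSlack G u v x = ∑ w ∈ G.neighborFinset u, x s(u, w) - 2 * x s(u, v) := by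
  rw [vertexSlack_apply, ← add_sum_erase _ _ ((mem_neighborFinset G u v).mpr huv)]
  ring

def leafSum (G : SimpleGraph V) : (Sym2 V → ℝ) →ₗ[ℝ] ℝ :=
  ∑ e ∈ (leafEdges G).toFinset, LinearMap.proj e

theorem leafSum_apply (x : Sym2 V → ℝ) :
    leafSum G x = ∑ e ∈ (leafEdges G).toFinset, x e := by
  simp [leafSum]

end VertexSlack

section PathVectors

variable [Fintype V] {G : SimpleGraph V} {a b u : V}

def walkNeighbors (p : G.Walk a b) (u : V) : Finset V :=
  (G.neighborFinset u).filter fun w => s(u, w) ∈ p.edges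

theorem mem_walkNeighbors {p : G.Walk a b} {w : V} :
    w ∈ walkNeighbors p u ↔ s(u, w) ∈ p.edges := by
  simp only [walkNeighbors, mem_filter, mem_neighborFinset, and_iff_right_iff_imp]
  exact p.adj_of_mem_edges

theorem walkNeighbors_eq_empty {p : G.Walk a b} (hu : u ∉ p.support) : walkNeighbors p u = ∅ :=
  eq_empty_of_forall_notMem fun _ hw =>
    hu (p.fst_mem_support_of_mem_edges (mem_walkNeighbors.mp hw))

theorem card_walkNeighbors_le_degree (p : G.Walk a b) (u : V) :
    #(walkNeighbors p u) ≤ G.degree u :=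
  (card_filter_le _ _).trans_eq (card_neighborFinset_eq_degree G u)

theorem SimpleGraph.Walk.IsPath.card_walkNeighbors {p : G.Walk a b} (hp : p.IsPath)
    (hu : u ∈ p.support) (ha : u ≠ a) (hb : u ≠ b) : #(walkNeighbors p u) = 2 := by
  obtain ⟨n, rfl, hn⟩ := Walk.mem_support_iff_exists_getVert.mp hu
  have hcoe : (walkNeighbors p (p.getVert n) : Set V) = p.toSubgraph.neighborSet (p.getVert n) := by
    ext w
    simp [mem_walkNeighbors, Walk.adj_toSubgraph_iff_mem_edges]
  rw [← Set.ncard_coe_finset, hcoe]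
  refine hp.ncard_neighborSet_toSubgraph_internal_eq_two ?_ (lt_of_le_of_ne hn ?_)
  · rintro rfl
    simp at ha
  · rintro rfl
    simp at hb

theorem IsLeaf.eq_or_eq_of_mem_support {p : G.Walk a b} (hp : p.IsPath) (hu : IsLeaf G u)
    (hus : u ∈ p.support) : u = a ∨ u = b := by
  by_contra! h
  have := hp.card_walkNeighbors hus h.1 h.2 ▸ card_walkNeighbors_le_degree p u
  rw [isLeaf_iff_degree_eq_one.mp hu] at this
  omega

theorem vertexSlack_pathVec (hG : G.IsAcyclic) {p : G.Walk a b} (hp : p.IsPath) (ha : u ≠ a)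
    (hb : u ≠ b) {v : V} (huv : G.Adj u v) :
    vertexSlack G u v (pathVec G a b) =
      if u ∈ p.support ∧ s(u, v) ∉ p.edges then 2 else 0 := by
  have hsum : ∑ w ∈ G.neighborFinset u, pathVec G a b s(u, w) = #(walkNeighbors p u) := by
    simp only [pathVec_eq_ite hG hp, sum_boole]
    rfl
  rw [vertexSlack_eq_sum_sub huv, hsum, pathVec_eq_ite hG hp]
  by_cases hu : u ∈ p.support
  · rw [hp.card_walkNeighbors hu ha hb]
    split_ifs <;> simp_all
  · rw [walkNeighbors_eq_empty hu, if_neg fun h => hu (p.fst_mem_support_of_mem_edges h)]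
    simp [hu]

theorem leafSum_pathVec (hG : G.IsTree) (hV : 2 < Fintype.card V) (hab : a ≠ b)
    (ha : IsLeaf G a) (hb : IsLeaf G b) : leafSum G (pathVec G a b) = 2 := by
  obtain ⟨p, hp, -⟩ := hG.existsUnique_path a b
  obtain ⟨wa, hwa, -⟩ := id ha
  obtain ⟨wb, hwb, -⟩ := id hb
  have hnil : ¬ p.Nil := Walk.not_nil_of_ne hab
  have hne : s(a, wa) ≠ s(b, wb) := by
    rintro h
    rcases Sym2.eq_iff.mp h with ⟨h, -⟩ | ⟨-, rfl⟩
    exacts [hab h, ha.not_adj hG.1 hV hb hwa]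
  have hleaf : (leafEdges G).toFinset.filter (· ∈ p.edges) = {s(a, wa), s(b, wb)} := by
    ext e
    rw [mem_filter, Set.mem_toFinset]
    simp only [leafEdges, Set.mem_ofPred_eq, mem_insert, mem_singleton]
    constructor
    · rintro ⟨⟨he, v, hve, hv⟩, hep⟩
      obtain ⟨w, rfl⟩ := Sym2.mem_iff_exists.mp hve
      rcases hv.eq_or_eq_of_mem_support hp (p.fst_mem_support_of_mem_edges hep) with rfl | rfl
      · exact Or.inl (by rw [ha.eq_of_adj (G.mem_edgeSet.mp he) hwa])
      · exact Or.inr (by rw [hb.eq_of_adj (G.mem_edgeSet.mp he) hwb])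
    · rintro (rfl | rfl)
      · exact ⟨⟨hwa, a, Sym2.mem_mk_left _ _, ha⟩, ha.mk_mem_edges hnil hwa⟩
      · refine ⟨⟨hwb, b, Sym2.mem_mk_left _ _, hb⟩, ?_⟩
        simpa using hb.mk_mem_edges (p := p.reverse) (by simpa using hnil) hwb
  rw [leafSum_apply]
  simp only [pathVec_eq_ite hG.2 hp, sum_boole, hleaf, card_pair hne]
  norm_num

end PathVectors

section CarefulPaths

variable [Fintype V] {G : SimpleGraph V} {x : Sym2 V → ℝ}

/-- The cone cut out by the homogeneous inequalities of `P_T`, with nonnegativity on every edge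
(which the inequalities imply, see `nonneg_of_degree_eq_three`). -/
structure IsAdmissible (G : SimpleGraph V) (x : Sym2 V → ℝ) : Prop where
  eq_zero_of_notMem : ∀ e ∉ G.edgeSet, x e = 0
  nonneg : ∀ e ∈ G.edgeSet, 0 ≤ x e
  vertexSlack_nonneg : ∀ u, ¬ IsLeaf G u → ∀ v, G.Adj u v → 0 ≤ vertexSlack G u v x

/-- A path through edges with `x > 0` that contains every edge `uv` at an internal vertex `u`
whose vertex inequality is tight: subtracting a small multiple of its indicator vector from `x`
keeps every tight inequality tight. -/
structure IsCareful (x : Sym2 V → ℝ) {a b : V} (p : G.Walk a b) : Prop where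
  pos : ∀ e ∈ p.edges, 0 < x e
  mem_edges_of_vertexSlack_eq_zero : ∀ u ∈ p.support, u ≠ a → u ≠ b →
    ∀ v, G.Adj u v → vertexSlack G u v x = 0 → s(u, v) ∈ p.edges

/-- Two tight inequalities `(w, v)`, `(w, c)` with `v, c ≠ d` would give `x_wv = x_wc = S / 2`
for the total `S` of `x` around `w`, leaving nothing for `x_wd > 0`. -/
theorem IsAdmissible.exists_continuation (hx : IsAdmissible G x) {w d : V} (hw : ¬ IsLeaf G w)
    (hwd : G.Adj w d) (hpos : 0 < x s(w, d)) :
    ∃ c, G.Adj w c ∧ c ≠ d ∧ 0 < x s(w, c) ∧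
      ∀ v, G.Adj w v → vertexSlack G w v x = 0 → v = d ∨ v = c := by
  have hle : ∀ t ⊆ G.neighborFinset w,
      ∑ z ∈ t, x s(w, z) ≤ ∑ z ∈ G.neighborFinset w, x s(w, z) :=
    fun t ht => sum_le_sum_of_subset_of_nonneg ht fun z hz _ =>
      hx.nonneg _ ((mem_neighborFinset G w z).mp hz)
  have hd : d ∈ G.neighborFinset w := (mem_neighborFinset G w d).mpr hwd
  by_cases htight : ∃ c, G.Adj w c ∧ c ≠ d ∧ vertexSlack G w c x = 0
  · obtain ⟨c, hwc, hcd, hc0⟩ := htight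
    have hc : c ∈ G.neighborFinset w := (mem_neighborFinset G w c).mpr hwc
    rw [vertexSlack_eq_sum_sub hwc] at hc0
    have hcd_le := hle {c, d} (insert_subset hc (singleton_subset_iff.mpr hd))
    rw [sum_pair hcd] at hcd_le
    refine ⟨c, hwc, hcd, by linarith, fun v hwv hv0 => ?_⟩
    by_contra! hv
    rw [vertexSlack_eq_sum_sub hwv] at hv0
    have hv_le := hle {v, c, d} (insert_subset ((mem_neighborFinset G w v).mpr hwv)
      (insert_subset hc (singleton_subset_iff.mpr hd)))
    rw [sum_insert (by simp [hv.1, hv.2]), sum_pair hcd] at hv_le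
    linarith
  · push Not at htight
    have hslack := hx.vertexSlack_nonneg w hw d hwd
    rw [vertexSlack_apply] at hslack
    obtain ⟨c, hc, hcpos⟩ : ∃ c ∈ (G.neighborFinset w).erase d, 0 < x s(w, c) := by
      by_contra! hall
      linarith [sum_nonpos hall]
    obtain ⟨hcd, hwc⟩ := mem_erase.mp hc
    exact ⟨c, (mem_neighborFinset G w c).mp hwc, hcd, hcpos, fun v hwv hv0 =>
      Or.inl (by_contra fun hvd => htight v hwv hvd hv0)⟩

theorem IsCareful.exists_cons (hG : G.IsAcyclic) (hx : IsAdmissible G x) {w i : V}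
    {p : G.Walk w i} (hp : p.IsPath) (hnil : ¬ p.Nil) (hc : IsCareful x p)
    (hw : ¬ IsLeaf G w) :
    ∃ (c : V) (h : G.Adj c w), (Walk.cons h p).IsPath ∧ IsCareful x (Walk.cons h p) := by
  cases p with
  | nil => simp at hnil
  | @cons _ d _ hwd p =>
    obtain ⟨c, hwc, hcd, hpos, htight⟩ := hx.exists_continuation hw hwd (hc.pos _ (by simp))
    have hcp : c ∉ (Walk.cons hwd p).support := fun hcs =>
      hcd (by simpa using hG.eq_snd_of_adj_start hp hwc hcs)
    refine ⟨c, hwc.symm, hp.cons hcp, ⟨fun e he => ?_, fun u hu huc hui v huv h0 => ?_⟩⟩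
    · rw [Walk.edges_cons, List.mem_cons] at he
      rcases he with rfl | he
      exacts [Sym2.eq_swap ▸ hpos, hc.pos e he]
    · rw [Walk.support_cons, List.mem_cons] at hu
      rw [Walk.edges_cons, List.mem_cons]
      rcases hu with rfl | hu
      · exact absurd rfl huc
      by_cases huw : u = w
      · subst huw
        rcases htight v huv h0 with rfl | rfl
        exacts [Or.inr (by simp), Or.inl Sym2.eq_swap]
      · exact Or.inr (hc.mem_edges_of_vertexSlack_eq_zero u hu huw hui v huv h0)

theorem IsCareful.exists_extend_to_leaf (hG : G.IsAcyclic) (hx : IsAdmissible G x) {w i : V}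
    {p : G.Walk w i} (hp : p.IsPath) (hnil : ¬ p.Nil) (hc : IsCareful x p) :
    ∃ (j : V) (q : G.Walk j i), IsLeaf G j ∧ q.IsPath ∧ ¬ q.Nil ∧ IsCareful x q := by
  by_cases hw : IsLeaf G w
  · exact ⟨w, p, hw, hp, hnil, hc⟩
  · obtain ⟨c, h, hq, hcq⟩ := hc.exists_cons hG hx hp hnil hw
    exact hcq.exists_extend_to_leaf hG hx hq Walk.not_nil_cons
termination_by Fintype.card V - p.length
decreasing_by
  have := hp.length_lt
  simp only [Walk.length_cons]
  omega

theorem IsCareful.reverse {a b : V} {p : G.Walk a b} (hc : IsCareful x p) :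
    IsCareful x p.reverse where
  pos e he := hc.pos e (by simpa using he)
  mem_edges_of_vertexSlack_eq_zero u hu hub hua v huv h0 := by
    simpa using hc.mem_edges_of_vertexSlack_eq_zero u (by simpa using hu) hua hub v huv h0

theorem IsAdmissible.exists_careful_leaf_path (hG : G.IsAcyclic) (hx : IsAdmissible G x)
    (hx0 : x ≠ 0) : ∃ i j, i ≠ j ∧ IsLeaf G i ∧ IsLeaf G j ∧
      ∃ q : G.Walk i j, q.IsPath ∧ IsCareful x q := by
  obtain ⟨e, he⟩ := Function.ne_iff.mp hx0
  have heG : e ∈ G.edgeSet := by_contra fun h => he (hx.eq_zero_of_notMem e h)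
  induction e using Sym2.ind with
  | _ a b =>
  have hab : G.Adj a b := heG
  have hp : (Walk.cons hab .nil).IsPath := by simp [hab.ne]
  have hc : IsCareful x (Walk.cons hab .nil) := by
    refine ⟨fun f hf => ?_, fun u hu hua hub => ?_⟩
    · simp only [Walk.edges_cons, Walk.edges_nil, List.mem_singleton] at hf
      exact hf ▸ (hx.nonneg _ heG).lt_of_ne' he
    · simp [hua, hub] at hu
  obtain ⟨j, q, hj, hq, hqnil, hqc⟩ := hc.exists_extend_to_leaf hG hx hp Walk.not_nil_cons
  obtain ⟨k, r, hk, hr, hrnil, hrc⟩ :=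
    hqc.reverse.exists_extend_to_leaf hG hx hq.reverse (by simpa using hqnil)
  exact ⟨k, j, fun h => hrnil (by subst h; exact Walk.isPath_iff_nil.mp hr), hk, hj, r, hr, hrc⟩

end CarefulPaths

section Descent

variable [Fintype V] {G : SimpleGraph V} {x : Sym2 V → ℝ}

theorem pathVec_isAdmissible (hG : G.IsTree) {a b : V} (ha : IsLeaf G a) (hb : IsLeaf G b) :
    IsAdmissible G (pathVec G a b) := by
  obtain ⟨p, hp, -⟩ := hG.existsUnique_path a b
  refine ⟨fun e he => pathVec_eq_zero_of_notMem he, fun e _ => ?_, fun u hu v huv => ?_⟩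
  · rw [pathVec_eq_ite hG.2 hp]
    split_ifs <;> norm_num
  · rw [vertexSlack_pathVec hG.2 hp (by rintro rfl; exact hu ha) (by rintro rfl; exact hu hb) huv]
    split_ifs <;> norm_num

theorem IsAdmissible.smul_add_smul {y : Sym2 V → ℝ} (hx : IsAdmissible G x)
    (hy : IsAdmissible G y) {s t : ℝ} (hs : 0 ≤ s) (ht : 0 ≤ t) :
    IsAdmissible G (s • x + t • y) where
  eq_zero_of_notMem e he := by simp [hx.eq_zero_of_notMem e he, hy.eq_zero_of_notMem e he]
  nonneg e he := by
    have := hx.nonneg e he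
    have := hy.nonneg e he
    simp only [Pi.add_apply, Pi.smul_apply, smul_eq_mul]
    positivity
  vertexSlack_nonneg u hu v huv := by
    have := hx.vertexSlack_nonneg u hu v huv
    have := hy.vertexSlack_nonneg u hu v huv
    simp only [map_add, map_smul, smul_eq_mul]
    positivity

theorem IsAdmissible.leafSum_nonneg (hx : IsAdmissible G x) : 0 ≤ leafSum G x := by
  rw [leafSum_apply]
  exact sum_nonneg fun e he => hx.nonneg e (Set.mem_toFinset.mp he).1

/-- The homogeneous inequalities, indexed by edges (nonnegativity) and by pairs `(u, v)` with
`u` internal (vertex inequalities). -/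
def constraintIndex (G : SimpleGraph V) : Finset (Sym2 V ⊕ V × V) :=
  G.edgeFinset.disjSum {p : V × V | G.Adj p.1 p.2 ∧ ¬ IsLeaf G p.1}

def constraint (G : SimpleGraph V) : Sym2 V ⊕ V × V → (Sym2 V → ℝ) →ₗ[ℝ] ℝ :=
  Sum.elim LinearMap.proj fun p => vertexSlack G p.1 p.2

def looseCount (G : SimpleGraph V) (x : Sym2 V → ℝ) : ℕ :=
  #{k ∈ constraintIndex G | constraint G k x ≠ 0}

theorem isAdmissible_iff_constraint_nonneg : IsAdmissible G x ↔
    (∀ e ∉ G.edgeSet, x e = 0) ∧ ∀ k ∈ constraintIndex G, 0 ≤ constraint G k x := by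
  simp only [constraintIndex, constraint, Sum.forall, inl_mem_disjSum, inr_mem_disjSum,
    mem_edgeFinset, mem_filter, mem_univ, true_and, Sum.elim_inl, Sum.elim_inr,
    LinearMap.proj_apply, Prod.forall]
  exact ⟨fun ⟨h0, hnn, hsl⟩ => ⟨h0, hnn, fun u v h => hsl u h.2 v h.1⟩,
    fun ⟨h0, hnn, hsl⟩ => ⟨h0, hnn, fun u hu v huv => hsl u v ⟨huv, hu⟩⟩⟩

/-- The ratio test of the simplex method. -/
theorem exists_pos_sub_mul_nonneg_card_lt {ι : Type*} (s : Finset ι) {a b : ι → ℝ}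
    (ha : ∀ i ∈ s, 0 ≤ a i) (hb : ∀ i ∈ s, 0 ≤ b i)
    (hab : ∀ i ∈ s, a i = 0 → b i = 0)
    (hpos : ∃ i ∈ s, 0 < b i) :
    ∃ t : ℝ, 0 < t ∧ (∀ i ∈ s, 0 ≤ a i - t * b i) ∧
      #{i ∈ s | a i - t * b i ≠ 0} < #{i ∈ s | a i ≠ 0} := by
  have hS : ({i ∈ s | 0 < b i} : Finset ι).Nonempty :=
    let ⟨i, hi, h⟩ := hpos; ⟨i, mem_filter.mpr ⟨hi, h⟩⟩
  obtain ⟨i₀, hi₀, hmin⟩ := exists_mem_eq_inf' hS fun i => a i / b i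
  obtain ⟨hi₀s, hbi₀⟩ := mem_filter.mp hi₀
  have hai₀ : 0 < a i₀ := (ha i₀ hi₀s).lt_of_ne fun h => hbi₀.ne' (hab i₀ hi₀s h.symm)
  have hle : ∀ i ∈ s, 0 ≤ a i - a i₀ / b i₀ * b i := by
    intro i hi
    rcases (hb i hi).eq_or_lt with h | h
    · simp [← h, ha i hi]
    · have := hmin ▸ inf'_le (fun i => a i / b i) (mem_filter.mpr ⟨hi, h⟩)
      rw [le_div_iff₀ h] at this
      linarith
  refine ⟨a i₀ / b i₀, div_pos hai₀ hbi₀, hle, card_lt_card ?_⟩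
  refine (ssubset_iff_of_subset fun i hi => ?_).mpr ⟨i₀, ?_, ?_⟩
  · simp only [mem_filter] at hi ⊢
    exact ⟨hi.1, fun h => hi.2 (by simp [h, hab i hi.1 h])⟩
  · simp [hi₀s, hai₀.ne']
  · simp [div_mul_cancel₀ _ hbi₀.ne']

theorem IsAdmissible.exists_sub_smul {c : Sym2 V → ℝ} (hx : IsAdmissible G x)
    (hc : IsAdmissible G c)
    (hzero : ∀ k ∈ constraintIndex G, constraint G k x = 0 → constraint G k c = 0)
    (hpos : ∃ k ∈ constraintIndex G, 0 < constraint G k c) :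
    ∃ t : ℝ, 0 < t ∧ IsAdmissible G (x - t • c) ∧
      looseCount G (x - t • c) < looseCount G x := by
  rw [isAdmissible_iff_constraint_nonneg] at hx hc
  obtain ⟨t, ht, hnn, hlt⟩ :=
    exists_pos_sub_mul_nonneg_card_lt (constraintIndex G) hx.2 hc.2 hzero hpos
  have hk : ∀ k, constraint G k (x - t • c) = constraint G k x - t * constraint G k c := by
    simp
  refine ⟨t, ht, isAdmissible_iff_constraint_nonneg.mpr
    ⟨fun e he => ?_, fun k hk' => ?_⟩, ?_⟩
  · simp [hx.1 e he, hc.1 e he]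
  · exact (hk k).symm ▸ hnn k hk'
  · simpa only [looseCount, hk] using hlt

theorem IsCareful.constraint_pathVec_eq_zero (hG : G.IsAcyclic) {i j : V} (hi : IsLeaf G i)
    (hj : IsLeaf G j) {q : G.Walk i j} (hq : q.IsPath) (hc : IsCareful x q) :
    ∀ k ∈ constraintIndex G, constraint G k x = 0 → constraint G k (pathVec G i j) = 0 := by
  rintro (e | ⟨u, v⟩) hk h0
  · simp only [constraint, Sum.elim_inl, LinearMap.proj_apply] at h0 ⊢
    rw [pathVec_eq_ite hG hq, if_neg fun he => (hc.pos e he).ne' h0]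
  · simp only [constraintIndex, inr_mem_disjSum, mem_filter, mem_univ, true_and] at hk
    simp only [constraint, Sum.elim_inr] at h0 ⊢
    have hui : u ≠ i := fun h => hk.2 (h ▸ hi)
    have huj : u ≠ j := fun h => hk.2 (h ▸ hj)
    rw [vertexSlack_pathVec hG hq hui huj hk.1, if_neg]
    exact fun ⟨hu, hne⟩ => hne (hc.mem_edges_of_vertexSlack_eq_zero u hu hui huj v hk.1 h0)

end Descent

theorem IsAdmissible.mem_smul_pathPolytope [Fintype V] {G : SimpleGraph V} (hG : G.IsTree)
    (hV : 2 < Fintype.card V) {x : Sym2 V → ℝ} (hx : IsAdmissible G x) (hx0 : x ≠ 0) :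
    x ∈ (leafSum G x / 2) • pathPolytope G := by
  obtain ⟨i, j, hij, hi, hj, q, hq, hqc⟩ := hx.exists_careful_leaf_path hG.2 hx0
  have hcP : pathVec G i j ∈ pathPolytope G :=
    subset_convexHull ℝ _ ⟨i, j, hij, hi, hj, rfl⟩
  obtain ⟨e, he⟩ := List.exists_mem_of_ne_nil q.edges (by simpa using Walk.not_nil_of_ne hij)
  obtain ⟨t, ht, hy, hlt⟩ := hx.exists_sub_smul (pathVec_isAdmissible hG hi hj)
    (hqc.constraint_pathVec_eq_zero hG.2 hi hj hq)
    ⟨.inl e, by simp [constraintIndex, q.edges_subset_edgeSet he],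
      by simp [constraint, pathVec_eq_ite hG.2 hq, he]⟩
  set c := pathVec G i j
  set y := x - t • c with hy_def
  have hsum : leafSum G x / 2 = t + leafSum G y / 2 := by
    simp only [hy_def, map_sub, map_smul, c, leafSum_pathVec hG hV hij hi hj, smul_eq_mul]
    ring
  have hxy : x = t • c + y := by
    rw [hy_def]
    abel
  have htc : t • c ∈ t • pathPolytope G := Set.smul_mem_smul_set hcP
  rw [hsum, hxy]
  by_cases hy0 : y = 0
  · simpa [hy0] using htc
  · have hconv : Convex ℝ (pathPolytope G) := convex_convexHull ℝ _
    rw [hconv.add_smul ht.le (by linarith [hy.leafSum_nonneg])]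
    exact Set.add_mem_add htc (hy.mem_smul_pathPolytope hG hV hy0)
termination_by looseCount G x

section Halfspaces

variable [Fintype V] {G : SimpleGraph V} {x : Sym2 V → ℝ}

/-- At a vertex of degree 3 with neighbours `v, a, b`, the slacks towards `a` and `b` add up
to `2 x_uv`. -/
theorem nonneg_of_degree_eq_three {u v : V} (h3 : G.degree u = 3) (huv : G.Adj u v)
    (hslack : ∀ w, G.Adj u w → 0 ≤ vertexSlack G u w x) : 0 ≤ x s(u, v) := by
  have hv : v ∈ G.neighborFinset u := (mem_neighborFinset G u v).mpr huv
  obtain ⟨a, b, hab, hpair⟩ : ∃ a b, a ≠ b ∧ (G.neighborFinset u).erase v = {a, b} := by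
    rw [← card_eq_two, card_erase_of_mem hv, card_neighborFinset_eq_degree, h3]
  have hN : G.neighborFinset u = {v, a, b} := by rw [← insert_erase hv, hpair]
  have hva : v ∉ ({a, b} : Finset V) := hpair ▸ notMem_erase v _
  have ha := hslack a ((mem_neighborFinset G u a).mp (by simp [hN]))
  have hb := hslack b ((mem_neighborFinset G u b).mp (by simp [hN]))
  rw [vertexSlack_eq_sum_sub ((mem_neighborFinset G u a).mp (by simp [hN])), hN,
    sum_insert hva, sum_pair hab] at ha
  rw [vertexSlack_eq_sum_sub ((mem_neighborFinset G u b).mp (by simp [hN])), hN,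
    sum_insert hva, sum_pair hab] at hb
  linarith

theorem halfspaces_iff_isAdmissible :
    ((∀ e, e ∉ G.edgeSet → x e = 0) ∧
      (∀ u v : V, G.Adj u v → (G.neighborSet u).ncard ≠ 3 →
        (G.neighborSet v).ncard ≠ 3 → 0 ≤ x s(u, v)) ∧
      (∀ u, ¬ IsLeaf G u → ∀ v ∈ G.neighborSet u,
        0 ≤ - x s(u, v) + ∑ᶠ w ∈ G.neighborSet u \ {v}, x s(u, w)) ∧
      (∑ᶠ e ∈ leafEdges G, x e = 2)) ↔ IsAdmissible G x ∧ leafSum G x = 2 := by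
  have hslack (u v : V) :
      - x s(u, v) + ∑ᶠ w ∈ G.neighborSet u \ {v}, x s(u, w) = vertexSlack G u v x := by
    rw [← coe_neighborFinset, ← coe_erase, finsum_mem_coe_finset, vertexSlack_apply]
    ring
  have hleaf : ∑ᶠ e ∈ leafEdges G, x e = leafSum G x := by
    rw [leafSum_apply, ← finsum_mem_coe_finset, Set.coe_toFinset]
  simp only [ncard_neighborSet_eq_degree, hslack, hleaf, mem_neighborSet]
  constructor
  · rintro ⟨h0, hdeg, hsl, h2⟩
    refine ⟨⟨h0, fun e he => ?_, hsl⟩, h2⟩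
    induction e using Sym2.ind with
    | _ u v =>
      have hnl {w : V} (hw : G.degree w = 3) : ¬ IsLeaf G w := by
        rw [isLeaf_iff_degree_eq_one, hw]
        decide
      by_cases hu : G.degree u = 3
      · exact nonneg_of_degree_eq_three hu he (hsl u (hnl hu))
      by_cases hv : G.degree v = 3
      · exact Sym2.eq_swap ▸ nonneg_of_degree_eq_three hv (G.adj_symm he) (hsl v (hnl hv))
      exact hdeg u v he hu hv
  · rintro ⟨hx, h2⟩
    exact ⟨hx.eq_zero_of_notMem, fun u v huv _ _ => hx.nonneg _ huv, hx.vertexSlack_nonneg, h2⟩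

theorem convex_isAdmissible_leafSum_eq (r : ℝ) :
    Convex ℝ {x : Sym2 V → ℝ | IsAdmissible G x ∧ leafSum G x = r} := by
  intro x hx y hy s t hs ht hst
  refine ⟨hx.1.smul_add_smul hy.1 hs ht, ?_⟩
  simp only [map_add, map_smul, smul_eq_mul, hx.2, hy.2, ← add_mul, hst, one_mul]

end Halfspaces

theorem pathPolytope_halfspace_representation_general [Fintype V] (G : SimpleGraph V)
    (hG : G.IsTree) (hcard : 3 < Fintype.card V) :
    {x : Sym2 V → ℝ |
        (∀ e, e ∉ G.edgeSet → x e = 0) ∧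
        (∀ u v : V, G.Adj u v → (G.neighborSet u).ncard ≠ 3 → (G.neighborSet v).ncard ≠ 3 →
          0 ≤ x s(u, v)) ∧
        (∀ u, ¬ IsLeaf G u → ∀ v ∈ G.neighborSet u,
          0 ≤ - x s(u, v) + ∑ᶠ w ∈ G.neighborSet u \ {v}, x s(u, w)) ∧
        (∑ᶠ e ∈ leafEdges G, x e = 2)}
      = pathPolytope G := by
  ext x
  rw [Set.mem_ofPred_eq, halfspaces_iff_isAdmissible]
  constructor
  · rintro ⟨hx, h2⟩
    have hx0 : x ≠ 0 := by
      rintro rfl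
      simp at h2
    simpa [h2] using hx.mem_smul_pathPolytope hG (by omega) hx0
  · refine fun hx => convexHull_min ?_ (convex_isAdmissible_leafSum_eq 2) hx
    rintro _ ⟨i, j, hij, hi, hj, rfl⟩
    exact ⟨pathVec_isAdmissible hG hi hj, leafSum_pathVec hG (by omega) hij hi hj⟩

/-- For a tree with more than 3 vertices and no internal vertex of degree
2, the path polytope (inside `ℝ^E`, i.e. with coordinates vanishing off the edge set) is cut
out by: `x_e ≥ 0` for edges with neither endpoint of degree 3, the inequalities
`−x_{u,v} + ∑_{w ∈ N(u)∖{v}} x_{u,w} ≥ 0` for internal `u` and `v ∈ N(u)`, and the equation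
`∑_{e ∈ E_leaf} x_e = 2`. -/
theorem pathPolytope_halfspace_representation [Fintype V] (G : SimpleGraph V)
    (hG : G.IsTree) (hcard : 3 < Fintype.card V)
    (hdeg2 : ∀ u, ¬ IsLeaf G u → (G.neighborSet u).ncard ≠ 2) :
    {x : Sym2 V → ℝ |
        (∀ e, e ∉ G.edgeSet → x e = 0) ∧
        (∀ u v : V, G.Adj u v → (G.neighborSet u).ncard ≠ 3 → (G.neighborSet v).ncard ≠ 3 →
          0 ≤ x s(u, v)) ∧
        (∀ u, ¬ IsLeaf G u → ∀ v ∈ G.neighborSet u,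
          0 ≤ - x s(u, v) + ∑ᶠ w ∈ G.neighborSet u \ {v}, x s(u, w)) ∧
        (∑ᶠ e ∈ leafEdges G, x e = 2)}
      = pathPolytope G :=
  pathPolytope_halfspace_representation_general G hG hcard
end
end
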